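/- arXiv:2107.08921 — 2 statements merged into one kernel-verified Lean document; each statement's English description precedes it below -/
import Mathlib

section
/- The handshaking expansion theorem for ACP_drt^τ: assuming handshaking communication (γ(γ(a,b),c) = δ for all actions a,b,c), the axioms of standard concurrency, and the handshaking axiom ν(x | y | z) = \underline{δ}, for all n > 2 the equation x₁ ∥ ⋯ ∥ xₙ = Σ_{1≤i≤n} xᵢ ⌊ (∥_{j≠i} x_j) + Σ_{1≤i<j≤n} (xᵢ | x_j) ⌊ (∥_{k≠i, k≠j} x_k) is derivable. -/
set_option autoImplicit true

/-- Actions extended with the silent action τ and deadlock δ. -/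
inductive ATD (A : Type) : Type where
  | act : A → ATD A
  | tau : ATD A
  | delta : ATD A

/-- Terms of ACP_drt^τ with guarded recursion (variables are natural numbers,
a recursive specification is a total function from variables to terms). -/
inductive Tm (A : Type) : Type where
  | und : ATD A → Tm A            -- undelayable action/silent step/deadlock constant
  | alt : Tm A → Tm A → Tm A      -- alternative composition +
  | seq : Tm A → Tm A → Tm A      -- sequential composition ·
  | delay : Tm A → Tm A           -- one-time-slice delay σ
  | par : Tm A → Tm A → Tm A      -- parallel composition ∥
  | lm : Tm A → Tm A → Tm A       -- left merge ⌊
  | cm : Tm A → Tm A → Tm A       -- communication merge |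
  | encap : Set A → Tm A → Tm A   -- encapsulation ∂_H
  | abstr : Set A → Tm A → Tm A   -- abstraction τ_I
  | timeout : Tm A → Tm A         -- current-time-slice time-out ν
  | var : ℕ → Tm A                -- variable
  | recc : (ℕ → Tm A) → ℕ → Tm A   -- recursion constant ⟨X|E⟩
  | shift : Tm A → Tm A           -- one-time-slice shift ω (auxiliary)
  | tfp : Tm A → Tm A             -- time-free projection π_tf (auxiliary)

namespace Tm
variable {A : Type}

/-- Apply an assignment of terms to variables (leaving recursion constants,
whose variables are bound, untouched). -/
def asg (θ : ℕ → Tm A) : Tm A → Tm A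
  | und a => und a
  | alt t u => alt (asg θ t) (asg θ u)
  | seq t u => seq (asg θ t) (asg θ u)
  | delay t => delay (asg θ t)
  | par t u => par (asg θ t) (asg θ u)
  | lm t u => lm (asg θ t) (asg θ u)
  | cm t u => cm (asg θ t) (asg θ u)
  | encap H t => encap H (asg θ t)
  | abstr I t => abstr I (asg θ t)
  | timeout t => timeout (asg θ t)
  | var X => θ X
  | recc E X => recc E X
  | shift t => shift (asg θ t)
  | tfp t => tfp (asg θ t)

/-- ⟨t|E⟩ : replace each variable Y of t by the recursion constant ⟨Y|E⟩. -/
def sub (E : ℕ → Tm A) (t : Tm A) : Tm A := asg (fun Y => recc E Y) t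

/-- n-fold one-time-slice delay σⁿ. -/
def delayN : ℕ → Tm A → Tm A
  | 0, t => t
  | n+1, t => delay (delayN n t)

/-- n-fold one-time-slice shift ωⁿ. -/
def shiftN : ℕ → Tm A → Tm A
  | 0, t => t
  | n+1, t => shift (shiftN n t)

/-- Syntactically guarded term: no abstraction operator occurs and each variable
occurrence is within a subterm a·t' (a an observable action) or σ(t'). -/
def Guarded : Tm A → Prop
  | und _ => True
  | alt t u => Guarded t ∧ Guarded u
  | seq t u => Guarded t ∧ (Guarded u ∨ ∃ a : A, t = und (ATD.act a))
  | delay _ => True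
  | par t u => Guarded t ∧ Guarded u
  | lm t u => Guarded t ∧ Guarded u
  | cm t u => Guarded t ∧ Guarded u
  | encap _ t => Guarded t
  | abstr _ _ => False
  | timeout t => Guarded t
  | var _ => False
  | recc _ _ => True
  | shift t => Guarded t
  | tfp _ => False

/-- Guarded recursive specification. -/
def GuardedSpec (E : ℕ → Tm A) : Prop := ∀ Y, Guarded (E Y)

/-- No free variables (variables inside recursion constants are bound). -/
def NoFreeVar : Tm A → Prop
  | und _ => True
  | alt t u => NoFreeVar t ∧ NoFreeVar u
  | seq t u => NoFreeVar t ∧ NoFreeVar u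
  | delay t => NoFreeVar t
  | par t u => NoFreeVar t ∧ NoFreeVar u
  | lm t u => NoFreeVar t ∧ NoFreeVar u
  | cm t u => NoFreeVar t ∧ NoFreeVar u
  | encap _ t => NoFreeVar t
  | abstr _ t => NoFreeVar t
  | timeout t => NoFreeVar t
  | var _ => False
  | recc _ _ => True
  | shift t => NoFreeVar t
  | tfp t => NoFreeVar t

/-- Proper ACP_drt^τ+REC term body: the auxiliary operators ω and π_tf do not
occur and all recursive specifications occurring in it are guarded. -/
def PT : Tm A → Prop
  | und _ => True
  | alt t u => PT t ∧ PT u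
  | seq t u => PT t ∧ PT u
  | delay t => PT t
  | par t u => PT t ∧ PT u
  | lm t u => PT t ∧ PT u
  | cm t u => PT t ∧ PT u
  | encap _ t => PT t
  | abstr _ t => PT t
  | timeout t => PT t
  | var _ => True
  | recc E _ => ∀ Y, Guarded (E Y) ∧ PT (E Y)
  | shift _ => False
  | tfp _ => False

/-- Element of 𝒫: closed ACP_drt^τ+REC term. -/
def PTm (t : Tm A) : Prop := PT t ∧ NoFreeVar t

/-- Closed ACP_drt^τ term (recursion-free, no variables, no auxiliary operators). -/
def Plain : Tm A → Prop
  | und _ => True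
  | alt t u => Plain t ∧ Plain u
  | seq t u => Plain t ∧ Plain u
  | delay t => Plain t
  | par t u => Plain t ∧ Plain u
  | lm t u => Plain t ∧ Plain u
  | cm t u => Plain t ∧ Plain u
  | encap _ t => Plain t
  | abstr _ t => Plain t
  | timeout t => Plain t
  | var _ => False
  | recc _ _ => False
  | shift _ => False
  | tfp _ => False

/-- No recursion constant occurs. -/
def RecFree : Tm A → Prop
  | und _ => True
  | alt t u => RecFree t ∧ RecFree u
  | seq t u => RecFree t ∧ RecFree u
  | delay t => RecFree t
  | par t u => RecFree t ∧ RecFree u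
  | lm t u => RecFree t ∧ RecFree u
  | cm t u => RecFree t ∧ RecFree u
  | encap _ t => RecFree t
  | abstr _ t => RecFree t
  | timeout t => RecFree t
  | var _ => True
  | recc _ _ => False
  | shift t => RecFree t
  | tfp t => RecFree t

/-- No abstraction operator occurs. -/
def AbstrFree : Tm A → Prop
  | und _ => True
  | alt t u => AbstrFree t ∧ AbstrFree u
  | seq t u => AbstrFree t ∧ AbstrFree u
  | delay t => AbstrFree t
  | par t u => AbstrFree t ∧ AbstrFree u
  | lm t u => AbstrFree t ∧ AbstrFree u
  | cm t u => AbstrFree t ∧ AbstrFree u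
  | encap _ t => AbstrFree t
  | abstr _ _ => False
  | timeout t => AbstrFree t
  | var _ => True
  | recc E _ => ∀ Y, AbstrFree (E Y)
  | shift t => AbstrFree t
  | tfp t => AbstrFree t

/-- Term of BPA_drt^τ+REC: no ∥, ⌊, |, ∂_H and no auxiliary operators. -/
def BpaP : Tm A → Prop
  | und _ => True
  | alt t u => BpaP t ∧ BpaP u
  | seq t u => BpaP t ∧ BpaP u
  | delay t => BpaP t
  | par _ _ => False
  | lm _ _ => False
  | cm _ _ => False
  | encap _ _ => False
  | abstr _ t => BpaP t
  | timeout t => BpaP t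
  | var _ => True
  | recc E _ => ∀ Y, BpaP (E Y)
  | shift _ => False
  | tfp _ => False

/-- The delayable action a = ⟨X | X = \underline{a} + σ(X)⟩. -/
def dact (a : ATD A) : Tm A := recc (fun _ => alt (und a) (delay (var 0))) 0

end Tm

/-- Finite alternative composition (the empty sum is \underline{δ}). -/
def altList {A : Type} : List (Tm A) → Tm A
  | [] => .und .delta
  | [t] => t
  | t :: ts => .alt t (altList ts)

/-- Finite parallel composition (the empty composition is \underline{δ}). -/
def parList {A : Type} : List (Tm A) → Tm A
  | [] => .und .delta
  | [t] => t
  | t :: ts => .par t (parList ts)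

/-- Basic terms over ACP_drt^τ. -/
inductive Basic {A : Type} : Tm A → Prop where
  | und (a : ATD A) : Basic (.und a)
  | pre (a : ATD A) (h : a ≠ ATD.delta) {t : Tm A} : Basic t → Basic (.seq (.und a) t)
  | delay {t : Tm A} : Basic t → Basic (.delay t)
  | alt {t u : Tm A} : Basic t → Basic u → Basic (.alt t u)

/-- ts-basic terms over ACP_drt^τ. -/
inductive TsBasic {A : Type} : Tm A → Prop where
  | und (a : ATD A) (n : ℕ) : TsBasic (Tm.delayN n (.und a))
  | pre (a : ATD A) (n : ℕ) (h : a ≠ ATD.delta) {t : Tm A} :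
      TsBasic t → TsBasic (.seq (Tm.delayN n (.und a)) t)
  | alt {t u : Tm A} : TsBasic t → TsBasic u → TsBasic (.alt t u)

/-- Linear terms. -/
inductive Linear {A : Type} : Tm A → Prop where
  | und (a : ATD A) : Linear (.und a)
  | pre (a : ATD A) (h : a ≠ ATD.delta) (X : ℕ) : Linear (.seq (.und a) (.var X))
  | delay (X : ℕ) : Linear (.delay (.var X))
  | alt {t u : Tm A} : Linear t → Linear u → Linear (.alt t u)

/-- Derivability in (conditional) equational logic from the axioms of ACP_drt^τ,
optionally (recOK) with the axioms RDP and RSP for guarded recursion, and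
optionally with additional axioms Ax. -/
inductive Deriv {A : Type} (γ : ATD A → ATD A → ATD A) (Ax : Tm A → Tm A → Prop)
    (recOK : Bool) : Tm A → Tm A → Prop where
  | refl (t) : Deriv γ Ax recOK t t
  | symm {t u} : Deriv γ Ax recOK t u → Deriv γ Ax recOK u t
  | trans {t u v} : Deriv γ Ax recOK t u → Deriv γ Ax recOK u v → Deriv γ Ax recOK t v
  | altCongr {t t' u u'} : Deriv γ Ax recOK t t' → Deriv γ Ax recOK u u' →
      Deriv γ Ax recOK (.alt t u) (.alt t' u')
  | seqCongr {t t' u u'} : Deriv γ Ax recOK t t' → Deriv γ Ax recOK u u' →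
      Deriv γ Ax recOK (.seq t u) (.seq t' u')
  | delayCongr {t t'} : Deriv γ Ax recOK t t' → Deriv γ Ax recOK (.delay t) (.delay t')
  | parCongr {t t' u u'} : Deriv γ Ax recOK t t' → Deriv γ Ax recOK u u' →
      Deriv γ Ax recOK (.par t u) (.par t' u')
  | lmCongr {t t' u u'} : Deriv γ Ax recOK t t' → Deriv γ Ax recOK u u' →
      Deriv γ Ax recOK (.lm t u) (.lm t' u')
  | cmCongr {t t' u u'} : Deriv γ Ax recOK t t' → Deriv γ Ax recOK u u' →
      Deriv γ Ax recOK (.cm t u) (.cm t' u')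
  | encapCongr (H) {t t'} : Deriv γ Ax recOK t t' →
      Deriv γ Ax recOK (.encap H t) (.encap H t')
  | abstrCongr (I) {t t'} : Deriv γ Ax recOK t t' →
      Deriv γ Ax recOK (.abstr I t) (.abstr I t')
  | timeoutCongr {t t'} : Deriv γ Ax recOK t t' →
      Deriv γ Ax recOK (.timeout t) (.timeout t')
  | shiftCongr {t t'} : Deriv γ Ax recOK t t' → Deriv γ Ax recOK (.shift t) (.shift t')
  | tfpCongr {t t'} : Deriv γ Ax recOK t t' → Deriv γ Ax recOK (.tfp t) (.tfp t')
  | extra {t u} : Ax t u → Deriv γ Ax recOK t u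
  -- A1–A7DR
  | A1 (x y) : Deriv γ Ax recOK (.alt x y) (.alt y x)
  | A2 (x y z) : Deriv γ Ax recOK (.alt (.alt x y) z) (.alt x (.alt y z))
  | A3 (x) : Deriv γ Ax recOK (.alt x x) x
  | A4 (x y z) : Deriv γ Ax recOK (.seq (.alt x y) z) (.alt (.seq x z) (.seq y z))
  | A5 (x y z) : Deriv γ Ax recOK (.seq (.seq x y) z) (.seq x (.seq y z))
  | A6DR (x) : Deriv γ Ax recOK (.alt x (.und .delta)) x
  | A7DR (x) : Deriv γ Ax recOK (.seq (.und .delta) x) (.und .delta)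
  -- DRT1, DRT2
  | DRT1 (x y) : Deriv γ Ax recOK (.alt (.delay x) (.delay y)) (.delay (.alt x y))
  | DRT2 (x y) : Deriv γ Ax recOK (.seq (.delay x) y) (.delay (.seq x y))
  -- encapsulation
  | D1DR (a : ATD A) (H : Set A) (h : ∀ b, a = ATD.act b → b ∉ H) :
      Deriv γ Ax recOK (.encap H (.und a)) (.und a)
  | D2DR (b : A) (H : Set A) (h : b ∈ H) :
      Deriv γ Ax recOK (.encap H (.und (.act b))) (.und .delta)
  | D3 (H x y) : Deriv γ Ax recOK (.encap H (.alt x y)) (.alt (.encap H x) (.encap H y))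
  | D4 (H x y) : Deriv γ Ax recOK (.encap H (.seq x y)) (.seq (.encap H x) (.encap H y))
  | DRD (H x) : Deriv γ Ax recOK (.encap H (.delay x)) (.delay (.encap H x))
  -- abstraction
  | TI1DR (a : ATD A) (I : Set A) (h : ∀ b, a = ATD.act b → b ∉ I) :
      Deriv γ Ax recOK (.abstr I (.und a)) (.und a)
  | TI2DR (b : A) (I : Set A) (h : b ∈ I) :
      Deriv γ Ax recOK (.abstr I (.und (.act b))) (.und .tau)
  | TI3 (I x y) : Deriv γ Ax recOK (.abstr I (.alt x y)) (.alt (.abstr I x) (.abstr I y))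
  | TI4 (I x y) : Deriv γ Ax recOK (.abstr I (.seq x y)) (.seq (.abstr I x) (.abstr I y))
  | DRTI (I x) : Deriv γ Ax recOK (.abstr I (.delay x)) (.delay (.abstr I x))
  -- merge
  | CM1 (x y) : Deriv γ Ax recOK (.par x y) (.alt (.alt (.lm x y) (.lm y x)) (.cm x y))
  | CM2DR (a : ATD A) (x) : Deriv γ Ax recOK (.lm (.und a) x) (.seq (.und a) x)
  | CM3DR (a : ATD A) (x y) :
      Deriv γ Ax recOK (.lm (.seq (.und a) x) y) (.seq (.und a) (.par x y))
  | DRCM1 (x y) : Deriv γ Ax recOK (.lm (.delay x) (.timeout y)) (.und .delta)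
  | DRCM2 (x y z) : Deriv γ Ax recOK (.lm (.delay x) (.alt (.timeout y) (.delay z)))
      (.delay (.lm x z))
  | CM4 (x y z) : Deriv γ Ax recOK (.lm (.alt x y) z) (.alt (.lm x z) (.lm y z))
  | CM5DR (a b : ATD A) (x) : Deriv γ Ax recOK (.cm (.seq (.und a) x) (.und b))
      (.seq (.cm (.und a) (.und b)) x)
  | CM6DR (a b : ATD A) (x) : Deriv γ Ax recOK (.cm (.und a) (.seq (.und b) x))
      (.seq (.cm (.und a) (.und b)) x)
  | CM7DR (a b : ATD A) (x y) : Deriv γ Ax recOK (.cm (.seq (.und a) x) (.seq (.und b) y))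
      (.seq (.cm (.und a) (.und b)) (.par x y))
  | DRCM3 (x y) : Deriv γ Ax recOK (.cm (.timeout x) (.delay y)) (.und .delta)
  | DRCM4 (x y) : Deriv γ Ax recOK (.cm (.delay x) (.timeout y)) (.und .delta)
  | DRCM5 (x y) : Deriv γ Ax recOK (.cm (.delay x) (.delay y)) (.delay (.cm x y))
  | CM8 (x y z) : Deriv γ Ax recOK (.cm (.alt x y) z) (.alt (.cm x z) (.cm y z))
  | CM9 (x y z) : Deriv γ Ax recOK (.cm x (.alt y z)) (.alt (.cm x y) (.cm x z))
  | CFDR (a b : ATD A) : Deriv γ Ax recOK (.cm (.und a) (.und b)) (.und (γ a b))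
  -- time-out
  | DRTO1 (a : ATD A) : Deriv γ Ax recOK (.timeout (.und a)) (.und a)
  | DRTO2 (x y) : Deriv γ Ax recOK (.timeout (.alt x y)) (.alt (.timeout x) (.timeout y))
  | DRTO3 (x y) : Deriv γ Ax recOK (.timeout (.seq x y)) (.seq (.timeout x) y)
  | DRTO4 (x) : Deriv γ Ax recOK (.timeout (.delay x)) (.und .delta)
  -- silent step
  | DRB1 (a : ATD A) : Deriv γ Ax recOK (.seq (.und a) (.und .tau)) (.und a)
  | DRB2 (a : ATD A) (x y) : Deriv γ Ax recOK
      (.seq (.und a) (.alt (.seq (.und .tau) (.alt (.timeout x) y)) (.timeout x)))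
      (.seq (.und a) (.alt (.timeout x) y))
  | DRB3 (a : ATD A) (x y) : Deriv γ Ax recOK
      (.seq (.und a) (.alt (.seq (.und .tau) (.alt (.timeout x) y)) y))
      (.seq (.und a) (.alt (.timeout x) y))
  | DRB4 (a : ATD A) (x y) : Deriv γ Ax recOK
      (.seq (.und a) (.alt (.delay (.seq (.und .tau) x)) (.timeout y)))
      (.seq (.und a) (.alt (.delay x) (.timeout y)))
  -- recursion
  | RDP (E : ℕ → Tm A) (X : ℕ) (hrec : recOK = true) (hg : Tm.GuardedSpec E) :
      Deriv γ Ax recOK (.recc E X) (Tm.sub E (E X))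
  | RSP (E : ℕ → Tm A) (θ : ℕ → Tm A) (X : ℕ) (hrec : recOK = true)
      (hg : Tm.GuardedSpec E) (h : ∀ Y, Deriv γ Ax recOK (θ Y) (Tm.asg θ (E Y))) :
      Deriv γ Ax recOK (θ X) (.recc E X)

/-- The empty set of additional axioms. -/
def NoAx {A : Type} : Tm A → Tm A → Prop := fun _ _ => False

/-! ### Two-phase structural operational semantics -/

/-- Map a transition label (A ∪ {τ}, with `none` = τ) into A ∪ {τ,δ}. -/
def toATD {A : Type} : Option A → ATD A
  | some a => ATD.act a
  | none => ATD.tau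

/-- Combination of the residues of two synchronously performed actions
(`none` stands for successful termination √). -/
def parOpt {A : Type} : Option (Tm A) → Option (Tm A) → Option (Tm A)
  | some x, some y => some (.par x y)
  | some x, none => some x
  | none, some y => some y
  | none, none => none

/-- Capability of idling till the next time slice. -/
inductive CanIdle {A : Type} : Tm A → Prop where
  | delay (t : Tm A) : CanIdle (.delay t)
  | altL {t u : Tm A} : CanIdle t → CanIdle (.alt t u)
  | altR {t u : Tm A} : CanIdle u → CanIdle (.alt t u)
  | seq {t : Tm A} (u : Tm A) : CanIdle t → CanIdle (.seq t u)
  | par {t u : Tm A} : CanIdle t → CanIdle u → CanIdle (.par t u)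
  | lm {t u : Tm A} : CanIdle t → CanIdle u → CanIdle (.lm t u)
  | cm {t u : Tm A} : CanIdle t → CanIdle u → CanIdle (.cm t u)
  | encap (H : Set A) {t : Tm A} : CanIdle t → CanIdle (.encap H t)
  | abstr (I : Set A) {t : Tm A} : CanIdle t → CanIdle (.abstr I t)
  | recc {E : ℕ → Tm A} {X : ℕ} : Tm.GuardedSpec E →
      CanIdle (Tm.sub E (E X)) → CanIdle (.recc E X)

/-- σ-transitions of the two-phase semantics (Table 3). -/
inductive SStep {A : Type} : Tm A → Tm A → Prop where
  | delay (t : Tm A) : SStep (.delay t) t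
  | altL {t t' u : Tm A} : SStep t t' → ¬ CanIdle u → SStep (.alt t u) t'
  | altR {t u u' : Tm A} : ¬ CanIdle t → SStep u u' → SStep (.alt t u) u'
  | altB {t t' u u' : Tm A} : SStep t t' → SStep u u' → SStep (.alt t u) (.alt t' u')
  | seq {t t' : Tm A} (u : Tm A) : SStep t t' → SStep (.seq t u) (.seq t' u)
  | par {t t' u u' : Tm A} : SStep t t' → SStep u u' → SStep (.par t u) (.par t' u')
  | lm {t t' u u' : Tm A} : SStep t t' → SStep u u' → SStep (.lm t u) (.lm t' u')
  | cm {t t' u u' : Tm A} : SStep t t' → SStep u u' → SStep (.cm t u) (.cm t' u')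
  | encap (H : Set A) {t t' : Tm A} : SStep t t' → SStep (.encap H t) (.encap H t')
  | abstr (I : Set A) {t t' : Tm A} : SStep t t' → SStep (.abstr I t) (.abstr I t')
  | recc {E : ℕ → Tm A} {X : ℕ} {t' : Tm A} : Tm.GuardedSpec E →
      SStep (Tm.sub E (E X)) t' → SStep (.recc E X) t'

/-- Action transitions of the two-phase semantics (Table 3); the label `none`
is the silent step τ and the target `none` is successful termination √. -/
inductive AStep {A : Type} (γ : ATD A → ATD A → ATD A) :
    Tm A → Option A → Option (Tm A) → Prop where
  | act (a : A) : AStep γ (.und (.act a)) (some a) none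
  | tau : AStep γ (.und .tau) none none
  | altL {t u ℓ o} : AStep γ t ℓ o → AStep γ (.alt t u) ℓ o
  | altR {t u ℓ o} : AStep γ u ℓ o → AStep γ (.alt t u) ℓ o
  | seqStep {t t' u ℓ} : AStep γ t ℓ (some t') → AStep γ (.seq t u) ℓ (some (.seq t' u))
  | seqTerm {t u ℓ} : AStep γ t ℓ none → AStep γ (.seq t u) ℓ (some u)
  | parL {t t' u ℓ} : AStep γ t ℓ (some t') → AStep γ (.par t u) ℓ (some (.par t' u))
  | parR {t u u' ℓ} : AStep γ u ℓ (some u') → AStep γ (.par t u) ℓ (some (.par t u'))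
  | parLT {t u ℓ} : AStep γ t ℓ none → AStep γ (.par t u) ℓ (some u)
  | parRT {t u ℓ} : AStep γ u ℓ none → AStep γ (.par t u) ℓ (some t)
  | parC {t u ℓ₁ ℓ₂ ℓ o₁ o₂} : AStep γ t ℓ₁ o₁ → AStep γ u ℓ₂ o₂ →
      γ (toATD ℓ₁) (toATD ℓ₂) = toATD ℓ → AStep γ (.par t u) ℓ (parOpt o₁ o₂)
  | lmStep {t t' u ℓ} : AStep γ t ℓ (some t') → AStep γ (.lm t u) ℓ (some (.par t' u))
  | lmTerm {t u ℓ} : AStep γ t ℓ none → AStep γ (.lm t u) ℓ (some u)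
  | cmC {t u ℓ₁ ℓ₂ ℓ o₁ o₂} : AStep γ t ℓ₁ o₁ → AStep γ u ℓ₂ o₂ →
      γ (toATD ℓ₁) (toATD ℓ₂) = toATD ℓ → AStep γ (.cm t u) ℓ (parOpt o₁ o₂)
  | encap (H : Set A) {t ℓ o} : AStep γ t ℓ o → (∀ b, ℓ = some b → b ∉ H) →
      AStep γ (.encap H t) ℓ (Option.map (Tm.encap H) o)
  | abstrKeep (I : Set A) {t ℓ o} : AStep γ t ℓ o → (∀ b, ℓ = some b → b ∉ I) →
      AStep γ (.abstr I t) ℓ (Option.map (Tm.abstr I) o)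
  | abstrHide (I : Set A) {t b o} : AStep γ t (some b) o → b ∈ I →
      AStep γ (.abstr I t) none (Option.map (Tm.abstr I) o)
  | timeout {t ℓ o} : AStep γ t ℓ o → AStep γ (.timeout t) ℓ o
  | recc {E X ℓ o} : Tm.GuardedSpec E → AStep γ (Tm.sub E (E X)) ℓ o →
      AStep γ (.recc E X) ℓ o

/-- Labels of the two-phase semantics: A ∪ {τ} ∪ {σ}. -/
inductive L2 (A : Type) where
  | act : A → L2 A
  | tau : L2 A
  | sig : L2 A

/-- Combined transition relation of the two-phase semantics. -/
def Step {A : Type} (γ : ATD A → ATD A → ATD A) (t : Tm A) :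
    L2 A → Option (Tm A) → Prop
  | .act a, o => AStep γ t (some a) o
  | .tau, o => AStep γ t none o
  | .sig, o => ∃ t', o = some t' ∧ SStep t t'

/-- A silent path t₂ = t*₀ →τ t*₁ →τ ⋯ →τ t*ₙ with R(t₁, t*ᵢ₊₁) at every step. -/
inductive TauSeq {A : Type} (γ : ATD A → ATD A → ATD A)
    (R : Option (Tm A) → Option (Tm A) → Prop) (t1 t2 : Tm A) : Tm A → Prop where
  | refl : TauSeq γ R t1 t2 t2
  | step {u v : Tm A} : TauSeq γ R t1 t2 u → AStep γ u none (some v) →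
      R (some t1) (some v) → TauSeq γ R t1 t2 v

/-- Branching bisimulation on the two-phase semantics. -/
def IsBB {A : Type} (γ : ATD A → ATD A → ATD A)
    (R : Option (Tm A) → Option (Tm A) → Prop) : Prop :=
  ∀ t1 t2, R (some t1) (some t2) →
    (∀ ℓ o1, Step γ t1 ℓ o1 →
      (ℓ = L2.tau ∧ R o1 (some t2)) ∨
      ∃ u o2, TauSeq γ R t1 t2 u ∧ Step γ u ℓ o2 ∧ R o1 o2) ∧
    (∀ ℓ o2, Step γ t2 ℓ o2 →
      (ℓ = L2.tau ∧ R (some t1) o2) ∨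
      ∃ u o1, TauSeq γ (fun p q => R q p) t2 t1 u ∧ Step γ u ℓ o1 ∧ R o1 o2)

/-- Branching bisimilarity ↔_b on the two-phase semantics. -/
def BBisim {A : Type} (γ : ATD A → ATD A → ATD A) (t1 t2 : Tm A) : Prop :=
  ∃ R, IsBB γ R ∧ R (some t1) (some t2)

/-- The root condition of a pair in a relation (two-phase semantics). -/
def RootCond {A : Type} (γ : ATD A → ATD A → ATD A)
    (R : Option (Tm A) → Option (Tm A) → Prop) (t1 t2 : Tm A) : Prop :=
  (∀ ℓ o1, Step γ t1 ℓ o1 → ∃ o2, Step γ t2 ℓ o2 ∧ R o1 o2) ∧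
  (∀ ℓ o2, Step γ t2 ℓ o2 → ∃ o1, Step γ t1 ℓ o1 ∧ R o1 o2)

/-- Reachability by idling only. -/
def Midling {A : Type} : Tm A → Tm A → Prop := Relation.ReflTransGen SStep

/-- Rooted branching bisimilarity ↔_rb on the two-phase semantics. -/
def RootedBB {A : Type} (γ : ATD A → ATD A → ATD A) (t1 t2 : Tm A) : Prop :=
  ∃ R, IsBB γ R ∧ R (some t1) (some t2) ∧
    ∀ t1' t2', Midling t1 t1' → Midling t2 t2' → R (some t1') (some t2') →
      RootCond γ R t1' t2'

/-! ### Time-stamped structural operational semantics -/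

/-- Idling relation of the time-stamped semantics: t ⇑ n. -/
inductive Idles {A : Type} : Tm A → ℕ → Prop where
  | zero (t : Tm A) : Idles t 0
  | altL {t u n} : Idles t n → Idles (.alt t u) n
  | altR {t u n} : Idles u n → Idles (.alt t u) n
  | seq {t n} (u : Tm A) : Idles t n → Idles (.seq t u) n
  | delay {t n} : Idles t n → Idles (.delay t) (n+1)
  | par {t u n} : Idles t n → Idles u n → Idles (.par t u) n
  | lm {t u n} : Idles t n → Idles u n → Idles (.lm t u) n
  | cm {t u n} : Idles t n → Idles u n → Idles (.cm t u) n
  | encap (H : Set A) {t n} : Idles t n → Idles (.encap H t) n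
  | abstr (I : Set A) {t n} : Idles t n → Idles (.abstr I t) n
  | recc {E X n} : Tm.GuardedSpec E → Idles (Tm.sub E (E X)) n → Idles (.recc E X) n
  | shift {t n} : Idles t (n+1) → Idles (.shift t) n

/-- Time-stamped transitions t →^{a[n]} t' (Table 6); the label `none` is τ and
the target `none` is successful termination √. -/
inductive TStep {A : Type} (γ : ATD A → ATD A → ATD A) :
    Tm A → Option A → ℕ → Option (Tm A) → Prop where
  | act (a : A) : TStep γ (.und (.act a)) (some a) 0 none
  | tau : TStep γ (.und .tau) none 0 none
  | altL {t u ℓ n o} : TStep γ t ℓ n o → TStep γ (.alt t u) ℓ n o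
  | altR {t u ℓ n o} : TStep γ u ℓ n o → TStep γ (.alt t u) ℓ n o
  | seqStep {t t' u ℓ n} : TStep γ t ℓ n (some t') →
      TStep γ (.seq t u) ℓ n (some (.seq t' u))
  | seqTerm {t u ℓ n} : TStep γ t ℓ n none → TStep γ (.seq t u) ℓ n (some u)
  | delay {t ℓ n o} : TStep γ t ℓ n o → TStep γ (.delay t) ℓ (n+1) o
  | parL {t t' u ℓ n} : TStep γ t ℓ n (some t') → Idles u n →
      TStep γ (.par t u) ℓ n (some (.par t' (Tm.shiftN n u)))
  | parR {t u u' ℓ n} : Idles t n → TStep γ u ℓ n (some u') →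
      TStep γ (.par t u) ℓ n (some (.par (Tm.shiftN n t) u'))
  | parLT {t u ℓ n} : TStep γ t ℓ n none → Idles u n →
      TStep γ (.par t u) ℓ n (some (Tm.shiftN n u))
  | parRT {t u ℓ n} : Idles t n → TStep γ u ℓ n none →
      TStep γ (.par t u) ℓ n (some (Tm.shiftN n t))
  | parC {t u ℓ₁ ℓ₂ ℓ n o₁ o₂} : TStep γ t ℓ₁ n o₁ → TStep γ u ℓ₂ n o₂ →
      γ (toATD ℓ₁) (toATD ℓ₂) = toATD ℓ → TStep γ (.par t u) ℓ n (parOpt o₁ o₂)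
  | lmStep {t t' u ℓ n} : TStep γ t ℓ n (some t') → Idles u n →
      TStep γ (.lm t u) ℓ n (some (.par t' (Tm.shiftN n u)))
  | lmTerm {t u ℓ n} : TStep γ t ℓ n none → Idles u n →
      TStep γ (.lm t u) ℓ n (some (Tm.shiftN n u))
  | cmC {t u ℓ₁ ℓ₂ ℓ n o₁ o₂} : TStep γ t ℓ₁ n o₁ → TStep γ u ℓ₂ n o₂ →
      γ (toATD ℓ₁) (toATD ℓ₂) = toATD ℓ → TStep γ (.cm t u) ℓ n (parOpt o₁ o₂)
  | encap (H : Set A) {t ℓ n o} : TStep γ t ℓ n o → (∀ b, ℓ = some b → b ∉ H) →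
      TStep γ (.encap H t) ℓ n (Option.map (Tm.encap H) o)
  | abstrKeep (I : Set A) {t ℓ n o} : TStep γ t ℓ n o → (∀ b, ℓ = some b → b ∉ I) →
      TStep γ (.abstr I t) ℓ n (Option.map (Tm.abstr I) o)
  | abstrHide (I : Set A) {t b n o} : TStep γ t (some b) n o → b ∈ I →
      TStep γ (.abstr I t) none n (Option.map (Tm.abstr I) o)
  | timeout {t ℓ o} : TStep γ t ℓ 0 o → TStep γ (.timeout t) ℓ 0 o
  | recc {E X ℓ n o} : Tm.GuardedSpec E → TStep γ (Tm.sub E (E X)) ℓ n o →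
      TStep γ (.recc E X) ℓ n o
  | shift {t ℓ n o} : TStep γ t ℓ (n+1) o → TStep γ (.shift t) ℓ n o

/-- A time-stamped silent path from t₂ with accumulated duration, relating the
appropriately shifted t₁ with every intermediate state. -/
inductive TsSeq {A : Type} (γ : ATD A → ATD A → ATD A)
    (R : Option (Tm A) → Option (Tm A) → Prop) (t1 t2 : Tm A) : ℕ → Tm A → Prop where
  | refl : TsSeq γ R t1 t2 0 t2
  | step {k u nk v} : TsSeq γ R t1 t2 k u → TStep γ u none nk (some v) →
      R (some (Tm.shiftN (k+nk) t1)) (some v) → TsSeq γ R t1 t2 (k+nk) v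

/-- ts-branching bisimulation. -/
def IsTsBB {A : Type} (γ : ATD A → ATD A → ATD A)
    (R : Option (Tm A) → Option (Tm A) → Prop) : Prop :=
  ∀ t1 t2, R (some t1) (some t2) →
    (∀ ℓ n o1, TStep γ t1 ℓ n o1 →
      (ℓ = none ∧ R o1 (some (Tm.shiftN n t2))) ∨
      ∃ k u nm o2, TsSeq γ R t1 t2 k u ∧ TStep γ u ℓ nm o2 ∧ k + nm = n ∧ R o1 o2) ∧
    (∀ ℓ n o2, TStep γ t2 ℓ n o2 →
      (ℓ = none ∧ R (some (Tm.shiftN n t1)) o2) ∨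
      ∃ k u nm o1, TsSeq γ (fun p q => R q p) t2 t1 k u ∧ TStep γ u ℓ nm o1 ∧
        k + nm = n ∧ R o1 o2) ∧
    (∀ n, Idles t1 n ↔ Idles t2 n)

/-- The ts-root condition of a pair in a relation. -/
def TsRootCond {A : Type} (γ : ATD A → ATD A → ATD A)
    (R : Option (Tm A) → Option (Tm A) → Prop) (t1 t2 : Tm A) : Prop :=
  (∀ ℓ n o1, TStep γ t1 ℓ n o1 → ∃ o2, TStep γ t2 ℓ n o2 ∧ R o1 o2) ∧
  (∀ ℓ n o2, TStep γ t2 ℓ n o2 → ∃ o1, TStep γ t1 ℓ n o1 ∧ R o1 o2)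

/-- Rooted ts-branching bisimilarity ↔'_rb. -/
def RootedTsBB {A : Type} (γ : ATD A → ATD A → ATD A) (t1 t2 : Tm A) : Prop :=
  ∃ R, IsTsBB γ R ∧ R (some t1) (some t2) ∧ TsRootCond γ R t1 t2

/-- Activeness: the capability of performing an action in the current time
slice, possibly after some silent steps in the current time slice. -/
inductive Active {A : Type} (γ : ATD A → ATD A → ATD A) : Tm A → Prop where
  | obs {t : Tm A} {a : A} {t' : Tm A} : TStep γ t (some a) 0 (some t') → Active γ t
  | term {t : Tm A} {ℓ : Option A} : TStep γ t ℓ 0 none → Active γ t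
  | tauStep {t t' : Tm A} : TStep γ t none 0 (some t') → Active γ t' → Active γ t

/-- Activeness extended to 𝒫 ∪ {√} (√ is not active). -/
def ActiveO {A : Type} (γ : ATD A → ATD A → ATD A) : Option (Tm A) → Prop
  | some t => Active γ t
  | none => False

/-- A time-stamped silent path for dormancy-aware branching bisimulations:
relatedness of an intermediate state is only required when it is active. -/
inductive DaSeq {A : Type} (γ : ATD A → ATD A → ATD A)
    (R : Option (Tm A) → Option (Tm A) → Prop) (t1 t2 : Tm A) : ℕ → Tm A → Prop where
  | refl : DaSeq γ R t1 t2 0 t2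
  | step {k u nk v} : DaSeq γ R t1 t2 k u → TStep γ u none nk (some v) →
      (Active γ v → R (some (Tm.shiftN (k+nk) t1)) (some v)) → DaSeq γ R t1 t2 (k+nk) v

/-- Dormancy-aware branching bisimulation. -/
def IsDaBB {A : Type} (γ : ATD A → ATD A → ATD A)
    (R : Option (Tm A) → Option (Tm A) → Prop) : Prop :=
  ∀ t1 t2, R (some t1) (some t2) →
    (∀ ℓ n o1, TStep γ t1 ℓ n o1 →
      (ℓ = none ∧ (ActiveO γ o1 → R o1 (some (Tm.shiftN n t2)))) ∨
      ∃ k u nm o2, DaSeq γ R t1 t2 k u ∧ TStep γ u ℓ nm o2 ∧ k + nm = n ∧ R o1 o2) ∧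
    (∀ ℓ n o2, TStep γ t2 ℓ n o2 →
      (ℓ = none ∧ (ActiveO γ o2 → R (some (Tm.shiftN n t1)) o2)) ∨
      ∃ k u nm o1, DaSeq γ (fun p q => R q p) t2 t1 k u ∧ TStep γ u ℓ nm o1 ∧
        k + nm = n ∧ R o1 o2) ∧
    (∀ n, Idles t1 n ↔ Idles t2 n)

/-- Rooted dormancy-aware branching bisimilarity ⇄_rb. -/
def RootedDaBB {A : Type} (γ : ATD A → ATD A → ATD A) (t1 t2 : Tm A) : Prop :=
  ∃ R, IsDaBB γ R ∧ R (some t1) (some t2) ∧ TsRootCond γ R t1 t2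

/-- n-fold σ-step sequences in the two-phase semantics. -/
def SSeq {A : Type} : ℕ → Tm A → Tm A → Prop
  | 0, t, t' => t' = t
  | n+1, t, t' => ∃ u, SStep t u ∧ SSeq n u t'

/-- The axioms of standard concurrency together with the handshaking axiom. -/
inductive SCAx {A : Type} : Tm A → Tm A → Prop where
  | parComm (x y : Tm A) : SCAx (.par x y) (.par y x)
  | parAssoc (x y z : Tm A) : SCAx (.par (.par x y) z) (.par x (.par y z))
  | lmAssoc (x y z : Tm A) : SCAx (.lm (.lm x y) z) (.lm x (.par y z))
  | cmComm (x y : Tm A) : SCAx (.cm x y) (.cm y x)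
  | cmAssoc (x y z : Tm A) : SCAx (.cm (.cm x y) z) (.cm x (.cm y z))
  | cmLm (x y z : Tm A) : SCAx (.cm x (.lm y z)) (.lm (.cm x y) z)
  | handshaking (x y z : Tm A) : SCAx (.timeout (.cm (.cm x y) z)) (.und .delta)

/-- The defining axioms of the time-free projection operator π_tf. -/
inductive TFPAx {A : Type} : Tm A → Tm A → Prop where
  | DRTFP1 (a : ATD A) : TFPAx (.tfp (.und a)) (Tm.dact a)
  | DRTFP2 (x y : Tm A) : TFPAx (.tfp (.alt x y)) (.alt (.tfp x) (.tfp y))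
  | DRTFP3 (x y : Tm A) : TFPAx (.tfp (.seq x y)) (.seq (.tfp x) (.tfp y))
  | DRTFP4 (x : Tm A) : TFPAx (.tfp (.delay x)) (.tfp x)

/-! ### The untimed theory ACP^τ+REC -/

/-- Terms of untimed ACP^τ with guarded recursion. -/
inductive UTm (A : Type) : Type where
  | c : ATD A → UTm A
  | alt : UTm A → UTm A → UTm A
  | seq : UTm A → UTm A → UTm A
  | par : UTm A → UTm A → UTm A
  | lm : UTm A → UTm A → UTm A
  | cm : UTm A → UTm A → UTm A
  | encap : Set A → UTm A → UTm A
  | abstr : Set A → UTm A → UTm A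
  | var : ℕ → UTm A
  | recc : (ℕ → UTm A) → ℕ → UTm A

namespace UTm
variable {A : Type}

def asg (θ : ℕ → UTm A) : UTm A → UTm A
  | c a => c a
  | alt t u => alt (asg θ t) (asg θ u)
  | seq t u => seq (asg θ t) (asg θ u)
  | par t u => par (asg θ t) (asg θ u)
  | lm t u => lm (asg θ t) (asg θ u)
  | cm t u => cm (asg θ t) (asg θ u)
  | encap H t => encap H (asg θ t)
  | abstr I t => abstr I (asg θ t)
  | var X => θ X
  | recc E X => recc E X

def sub (E : ℕ → UTm A) (t : UTm A) : UTm A := asg (fun Y => recc E Y) t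

def Guarded : UTm A → Prop
  | c _ => True
  | alt t u => Guarded t ∧ Guarded u
  | seq t u => Guarded t ∧ (Guarded u ∨ ∃ a : A, t = c (ATD.act a))
  | par t u => Guarded t ∧ Guarded u
  | lm t u => Guarded t ∧ Guarded u
  | cm t u => Guarded t ∧ Guarded u
  | encap _ t => Guarded t
  | abstr _ _ => False
  | var _ => False
  | recc _ _ => True

def GuardedSpec (E : ℕ → UTm A) : Prop := ∀ Y, Guarded (E Y)

/-- Closed untimed term. -/
def Closed : UTm A → Prop
  | c _ => True
  | alt t u => Closed t ∧ Closed u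
  | seq t u => Closed t ∧ Closed u
  | par t u => Closed t ∧ Closed u
  | lm t u => Closed t ∧ Closed u
  | cm t u => Closed t ∧ Closed u
  | encap _ t => Closed t
  | abstr _ t => Closed t
  | var _ => False
  | recc _ _ => True

end UTm

/-- Derivability from the axioms of untimed ACP^τ+REC (with the branching
silent-step axioms B1 and B2 and with RDP and RSP). -/
inductive UDeriv {A : Type} (γ : ATD A → ATD A → ATD A) : UTm A → UTm A → Prop where
  | refl (t) : UDeriv γ t t
  | symm {t u} : UDeriv γ t u → UDeriv γ u t
  | trans {t u v} : UDeriv γ t u → UDeriv γ u v → UDeriv γ t v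
  | altCongr {t t' u u'} : UDeriv γ t t' → UDeriv γ u u' → UDeriv γ (.alt t u) (.alt t' u')
  | seqCongr {t t' u u'} : UDeriv γ t t' → UDeriv γ u u' → UDeriv γ (.seq t u) (.seq t' u')
  | parCongr {t t' u u'} : UDeriv γ t t' → UDeriv γ u u' → UDeriv γ (.par t u) (.par t' u')
  | lmCongr {t t' u u'} : UDeriv γ t t' → UDeriv γ u u' → UDeriv γ (.lm t u) (.lm t' u')
  | cmCongr {t t' u u'} : UDeriv γ t t' → UDeriv γ u u' → UDeriv γ (.cm t u) (.cm t' u')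
  | encapCongr (H) {t t'} : UDeriv γ t t' → UDeriv γ (.encap H t) (.encap H t')
  | abstrCongr (I) {t t'} : UDeriv γ t t' → UDeriv γ (.abstr I t) (.abstr I t')
  | A1 (x y) : UDeriv γ (.alt x y) (.alt y x)
  | A2 (x y z) : UDeriv γ (.alt (.alt x y) z) (.alt x (.alt y z))
  | A3 (x) : UDeriv γ (.alt x x) x
  | A4 (x y z) : UDeriv γ (.seq (.alt x y) z) (.alt (.seq x z) (.seq y z))
  | A5 (x y z) : UDeriv γ (.seq (.seq x y) z) (.seq x (.seq y z))
  | A6 (x) : UDeriv γ (.alt x (.c .delta)) x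
  | A7 (x) : UDeriv γ (.seq (.c .delta) x) (.c .delta)
  | D1 (a : ATD A) (H : Set A) (h : ∀ b, a = ATD.act b → b ∉ H) :
      UDeriv γ (.encap H (.c a)) (.c a)
  | D2 (b : A) (H : Set A) (h : b ∈ H) : UDeriv γ (.encap H (.c (.act b))) (.c .delta)
  | D3 (H x y) : UDeriv γ (.encap H (.alt x y)) (.alt (.encap H x) (.encap H y))
  | D4 (H x y) : UDeriv γ (.encap H (.seq x y)) (.seq (.encap H x) (.encap H y))
  | TI1 (a : ATD A) (I : Set A) (h : ∀ b, a = ATD.act b → b ∉ I) :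
      UDeriv γ (.abstr I (.c a)) (.c a)
  | TI2 (b : A) (I : Set A) (h : b ∈ I) : UDeriv γ (.abstr I (.c (.act b))) (.c .tau)
  | TI3 (I x y) : UDeriv γ (.abstr I (.alt x y)) (.alt (.abstr I x) (.abstr I y))
  | TI4 (I x y) : UDeriv γ (.abstr I (.seq x y)) (.seq (.abstr I x) (.abstr I y))
  | CM1 (x y) : UDeriv γ (.par x y) (.alt (.alt (.lm x y) (.lm y x)) (.cm x y))
  | CM2 (a : ATD A) (x) : UDeriv γ (.lm (.c a) x) (.seq (.c a) x)
  | CM3 (a : ATD A) (x y) : UDeriv γ (.lm (.seq (.c a) x) y) (.seq (.c a) (.par x y))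
  | CM4 (x y z) : UDeriv γ (.lm (.alt x y) z) (.alt (.lm x z) (.lm y z))
  | CM5 (a b : ATD A) (x) : UDeriv γ (.cm (.seq (.c a) x) (.c b)) (.seq (.cm (.c a) (.c b)) x)
  | CM6 (a b : ATD A) (x) : UDeriv γ (.cm (.c a) (.seq (.c b) x)) (.seq (.cm (.c a) (.c b)) x)
  | CM7 (a b : ATD A) (x y) :
      UDeriv γ (.cm (.seq (.c a) x) (.seq (.c b) y)) (.seq (.cm (.c a) (.c b)) (.par x y))
  | CM8 (x y z) : UDeriv γ (.cm (.alt x y) z) (.alt (.cm x z) (.cm y z))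
  | CM9 (x y z) : UDeriv γ (.cm x (.alt y z)) (.alt (.cm x y) (.cm x z))
  | CF (a b : ATD A) : UDeriv γ (.cm (.c a) (.c b)) (.c (γ a b))
  | B1 (x) : UDeriv γ (.seq x (.c .tau)) x
  | B2 (x y z) : UDeriv γ (.seq x (.alt (.seq (.c .tau) (.alt y z)) z)) (.seq x (.alt y z))
  | RDP (E : ℕ → UTm A) (X : ℕ) (hg : UTm.GuardedSpec E) :
      UDeriv γ (.recc E X) (UTm.sub E (E X))
  | RSP (E : ℕ → UTm A) (θ : ℕ → UTm A) (X : ℕ) (hg : UTm.GuardedSpec E)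
      (h : ∀ Y, UDeriv γ (θ Y) (UTm.asg θ (E Y))) : UDeriv γ (θ X) (.recc E X)

/-- The embedding ε of untimed ACP^τ+REC terms into ACP_drt^τ+REC, replacing
each action constant a by the delayable action ⟨X | X = \underline{a} + σ(X)⟩. -/
def eps {A : Type} : UTm A → Tm A
  | .c a => Tm.dact a
  | .alt t u => .alt (eps t) (eps u)
  | .seq t u => .seq (eps t) (eps u)
  | .par t u => .par (eps t) (eps u)
  | .lm t u => .lm (eps t) (eps u)
  | .cm t u => .cm (eps t) (eps u)
  | .encap H t => .encap H (eps t)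
  | .abstr I t => .abstr I (eps t)
  | .var X => .var X
  | .recc E X => .recc (fun Y => eps (E Y)) X


/-!
The expansion is proved by induction on the number of components, for an arbitrary list of
indices, starting from axiom CM1 for two components. In the step
`X ∥ P = X ⌊ P + P ⌊ X + X | P`, the axioms of standard concurrency push `⌊ X` and `X |` through
the expansion of `P`. This yields every summand of the expansion of `X ∥ P` and, in addition, the
triple communications `(X | (xᵢ | xⱼ)) ⌊ (∥ rest)`; each of them is absorbed by the summand
`(X | xᵢ) ⌊ (xⱼ ∥ rest)`.

The absorption rests on `(x | y) | z` being a summand of `(x | y) ⌊ z` for closed terms, proved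
for basic terms after elimination. Write a basic term as an undelayed part `ν p` plus possibly a
delayed part `σ q`. Under handshaking every triple communication involving an undelayed part is
`δ`, so only `σ((x' | y') | z')` remains, and by induction it is a summand of
`σ((x' | y') ⌊ z') = σ(x' | y') ⌊ z`.
-/

set_option autoImplicit false

namespace Deriv

variable {A : Type} {γ : ATD A → ATD A → ATD A} {Ax : Tm A → Tm A → Prop} {r : Bool}

instance : Trans (Deriv γ Ax r) (Deriv γ Ax r) (Deriv γ Ax r) := ⟨Deriv.trans⟩

local notation:50 t:51 " ≐ " u:51 => Deriv γ Ax r t u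

theorem alt_delta_left (x : Tm A) : .alt (.und .delta) x ≐ x :=
  (A1 _ _).trans (A6DR x)

theorem timeout_seq_und (a : ATD A) (t : Tm A) :
    .timeout (.seq (.und a) t) ≐ .seq (.und a) t :=
  (DRTO3 _ t).trans (seqCongr (DRTO1 a) (refl t))

theorem cm_delay_of_timeout {b p : Tm A} (hb : b ≐ .timeout p) (v : Tm A) :
    .cm b (.delay v) ≐ .und .delta :=
  (cmCongr hb (refl _)).trans (DRCM3 p v)

theorem delay_cm_of_timeout {c p : Tm A} (hc : c ≐ .timeout p) (v : Tm A) :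
    .cm (.delay v) c ≐ .und .delta :=
  (cmCongr (refl _) hc).trans (DRCM4 v p)

theorem alt_right_comm (x y z : Tm A) : .alt (.alt x y) z ≐ .alt (.alt x z) y :=
  calc .alt (.alt x y) z ≐ .alt x (.alt y z) := A2 x y z
    _ ≐ .alt x (.alt z y) := altCongr (refl x) (A1 y z)
    _ ≐ .alt (.alt x z) y := (A2 x z y).symm

theorem alt_alt_alt_comm (w x y z : Tm A) :
    .alt (.alt w x) (.alt y z) ≐ .alt (.alt w y) (.alt x z) :=
  calc .alt (.alt w x) (.alt y z) ≐ .alt (.alt (.alt w x) y) z := (A2 _ y z).symm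
    _ ≐ .alt (.alt (.alt w y) x) z := altCongr (alt_right_comm w x y) (refl z)
    _ ≐ .alt (.alt w y) (.alt x z) := A2 _ x z

def Summand (γ : ATD A → ATD A → ATD A) (Ax : Tm A → Tm A → Prop) (r : Bool)
    (u v : Tm A) : Prop :=
  Deriv γ Ax r (.alt v u) v

local notation:50 u:51 " ⊑ " v:51 => Summand γ Ax r u v

namespace Summand

theorem refl (u : Tm A) : u ⊑ u := A3 u

theorem delta (v : Tm A) : .und .delta ⊑ v := A6DR v

theorem congr {u u' v v' : Tm A} (hu : u ≐ u') (hv : v ≐ v') (h : u ⊑ v) : u' ⊑ v' :=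
  ((altCongr hv.symm hu.symm).trans h).trans hv

theorem antisymm {u v : Tm A} (huv : u ⊑ v) (hvu : v ⊑ u) : u ≐ v :=
  hvu.symm.trans ((A1 u v).trans huv)

theorem trans {u v w : Tm A} (huv : u ⊑ v) (hvw : v ⊑ w) : u ⊑ w :=
  calc .alt w u ≐ .alt (.alt w v) u := altCongr hvw.symm (.refl u)
    _ ≐ .alt w (.alt v u) := A2 w v u
    _ ≐ .alt w v := altCongr (.refl w) huv
    _ ≐ w := hvw

theorem alt {u₁ u₂ v : Tm A} (h₁ : u₁ ⊑ v) (h₂ : u₂ ⊑ v) : .alt u₁ u₂ ⊑ v :=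
  calc .alt v (.alt u₁ u₂) ≐ .alt (.alt v u₁) u₂ := (A2 v u₁ u₂).symm
    _ ≐ .alt v u₂ := altCongr h₁ (.refl u₂)
    _ ≐ v := h₂

theorem alt_right {u v₁ v₂ : Tm A} (h : u ⊑ v₂) : u ⊑ .alt v₁ v₂ :=
  (A2 v₁ v₂ u).trans (altCongr (.refl v₁) h)

theorem alt_left {u v₁ v₂ : Tm A} (h : u ⊑ v₁) : u ⊑ .alt v₁ v₂ :=
  congr (.refl u) (A1 v₂ v₁) (alt_right h)

theorem alt_mono {u₁ u₂ v₁ v₂ : Tm A} (h₁ : u₁ ⊑ v₁) (h₂ : u₂ ⊑ v₂) :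
    .alt u₁ u₂ ⊑ .alt v₁ v₂ :=
  alt (alt_left h₁) (alt_right h₂)

theorem lm_mono {u v : Tm A} (h : u ⊑ v) (w : Tm A) : .lm u w ⊑ .lm v w :=
  (CM4 v u w).symm.trans (lmCongr h (.refl w))

theorem delay_mono {u v : Tm A} (h : u ⊑ v) : .delay u ⊑ .delay v :=
  (DRT1 v u).trans (delayCongr h)

end Summand

theorem alt_shuffle_of_summand {w x y z u : Tm A} (hu : u ⊑ z) :
    .alt (.alt w (.alt x y)) (.alt z u) ≐ .alt (.alt w x) (.alt z y) := by
  open Summand in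
  exact antisymm
    (alt (alt (alt_left (alt_left (.refl w)))
        (alt (alt_left (alt_right (.refl x))) (alt_right (alt_right (.refl y)))))
      (alt (alt_right (alt_left (.refl z))) (alt_right (alt_left hu))))
    (alt (alt (alt_left (alt_left (.refl w))) (alt_left (alt_right (alt_left (.refl x)))))
      (alt (alt_right (alt_left (.refl z))) (alt_left (alt_right (alt_right (.refl y))))))

theorem altList_cons (t : Tm A) (ts : List (Tm A)) :
    altList (t :: ts) ≐ .alt t (altList ts) := by
  cases ts with
  | nil => exact (A6DR t).symm
  | cons => exact refl _

theorem altList_append (L M : List (Tm A)) :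
    altList (L ++ M) ≐ .alt (altList L) (altList M) := by
  induction L with
  | nil => exact (alt_delta_left _).symm
  | cons t ts ih =>
    calc altList (t :: ts ++ M) ≐ .alt t (altList (ts ++ M)) := altList_cons t _
      _ ≐ .alt t (.alt (altList ts) (altList M)) := altCongr (refl t) ih
      _ ≐ .alt (.alt t (altList ts)) (altList M) := (A2 _ _ _).symm
      _ ≐ .alt (altList (t :: ts)) (altList M) :=
        altCongr (altList_cons t ts).symm (refl _)

theorem altList_map_congr {ι : Type} {l : List ι} {f g : ι → Tm A}
    (h : ∀ i ∈ l, f i ≐ g i) : altList (l.map f) ≐ altList (l.map g) := by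
  induction l with
  | nil => exact refl _
  | cons i is ih =>
    simp only [List.mem_cons, forall_eq_or_imp] at h
    exact (altList_cons _ _).trans ((altCongr h.1 (ih h.2)).trans (altList_cons _ _).symm)

theorem summand_altList {L : List (Tm A)} {v : Tm A} (h : ∀ t ∈ L, t ⊑ v) :
    altList L ⊑ v := by
  induction L with
  | nil => exact Summand.delta v
  | cons t ts ih =>
    simp only [List.mem_cons, forall_eq_or_imp] at h
    exact Summand.congr (altList_cons t ts).symm (refl v) (Summand.alt h.1 (ih h.2))

theorem summand_altList_of_mem {L : List (Tm A)} {t : Tm A} (h : t ∈ L) :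
    t ⊑ altList L := by
  induction L with
  | nil => simp at h
  | cons u us ih =>
    refine Summand.congr (refl t) (altList_cons u us).symm ?_
    rcases List.mem_cons.mp h with rfl | h
    · exact Summand.alt_left (Summand.refl t)
    · exact Summand.alt_right (ih h)

theorem lm_altList (L : List (Tm A)) (w : Tm A) :
    .lm (altList L) w ≐ altList (L.map (.lm · w)) := by
  induction L with
  | nil => exact (CM2DR _ w).trans (A7DR w)
  | cons t ts ih =>
    calc .lm (altList (t :: ts)) w ≐ .lm (.alt t (altList ts)) w :=
          lmCongr (altList_cons t ts) (refl w)
      _ ≐ .alt (.lm t w) (.lm (altList ts) w) := CM4 _ _ _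
      _ ≐ .alt (.lm t w) (altList (ts.map (.lm · w))) := altCongr (refl _) ih
      _ ≐ altList ((t :: ts).map (.lm · w)) := (altList_cons _ _).symm

theorem cm_altList {L : List (Tm A)} (hL : L ≠ []) (w : Tm A) :
    .cm w (altList L) ≐ altList (L.map (.cm w ·)) := by
  induction L with
  | nil => exact absurd rfl hL
  | cons t ts ih =>
    rcases eq_or_ne ts [] with rfl | hts
    · exact refl _
    calc .cm w (altList (t :: ts)) ≐ .cm w (.alt t (altList ts)) :=
          cmCongr (refl w) (altList_cons t ts)
      _ ≐ .alt (.cm w t) (.cm w (altList ts)) := CM9 _ _ _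
      _ ≐ .alt (.cm w t) (altList (ts.map (.cm w ·))) := altCongr (refl _) (ih hts)
      _ ≐ altList ((t :: ts).map (.cm w ·)) := (altList_cons _ _).symm

end Deriv

namespace Basic

open Deriv

variable {A : Type} {γ : ATD A → ATD A → ATD A} {Ax : Tm A → Tm A → Prop} {r : Bool}

local notation:50 t:51 " ≐ " u:51 => Deriv γ Ax r t u

theorem timeout_or_timeout_add_delay {d : Tm A} (hd : Basic d) :
    (∃ p, d ≐ .timeout p) ∨
      ∃ p q, Basic q ∧ sizeOf q < sizeOf d ∧ d ≐ .alt (.timeout p) (.delay q) := by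
  induction hd with
  | und a => exact .inl ⟨_, (DRTO1 a).symm⟩
  | pre a _ _ _ => exact .inl ⟨_, (timeout_seq_und a _).symm⟩
  | @delay t ht _ =>
    refine .inr ⟨.und .delta, t, ht, by simp, ?_⟩
    exact ((altCongr (DRTO1 .delta) (refl _)).trans (alt_delta_left _)).symm
  | alt _ _ ih₁ ih₂ =>
    rcases ih₁ with ⟨p₁, h₁⟩ | ⟨p₁, q₁, hq₁, hs₁, h₁⟩ <;>
      rcases ih₂ with ⟨p₂, h₂⟩ | ⟨p₂, q₂, hq₂, hs₂, h₂⟩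
    · exact .inl ⟨.alt p₁ p₂, (altCongr h₁ h₂).trans (DRTO2 p₁ p₂).symm⟩
    · refine .inr ⟨.alt p₁ p₂, q₂, hq₂, by simp; omega, (altCongr h₁ h₂).trans ?_⟩
      exact (A2 _ _ _).symm.trans (altCongr (DRTO2 p₁ p₂).symm (refl _))
    · refine .inr ⟨.alt p₁ p₂, q₁, hq₁, by simp; omega, (altCongr h₁ h₂).trans ?_⟩
      exact (alt_right_comm _ _ _).trans (altCongr (DRTO2 p₁ p₂).symm (refl _))
    · refine .inr ⟨.alt p₁ p₂, .alt q₁ q₂, .alt hq₁ hq₂, by simp; omega,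
        (altCongr h₁ h₂).trans ?_⟩
      exact (alt_alt_alt_comm _ _ _ _).trans (altCongr (DRTO2 p₁ p₂).symm (DRT1 q₁ q₂))

end Basic

def HasBasicForm {A : Type} (γ : ATD A → ATD A → ATD A) (Ax : Tm A → Tm A → Prop)
    (r : Bool) (t : Tm A) : Prop :=
  ∃ b, Basic b ∧ Deriv γ Ax r t b

namespace HasBasicForm

open Deriv

variable {A : Type} {γ : ATD A → ATD A → ATD A} {Ax : Tm A → Tm A → Prop} {r : Bool}

local notation:50 t:51 " ≐ " u:51 => Deriv γ Ax r t u

theorem of_basic {b : Tm A} (hb : Basic b) : HasBasicForm γ Ax r b := ⟨b, hb, refl b⟩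

theorem of_deriv {t t' : Tm A} (h : t ≐ t') (h' : HasBasicForm γ Ax r t') :
    HasBasicForm γ Ax r t :=
  let ⟨b, hb, hb'⟩ := h'; ⟨b, hb, h.trans hb'⟩

theorem alt {t u : Tm A} (ht : HasBasicForm γ Ax r t) (hu : HasBasicForm γ Ax r u) :
    HasBasicForm γ Ax r (.alt t u) :=
  let ⟨b, hb, hb'⟩ := ht
  let ⟨c, hc, hc'⟩ := hu
  ⟨.alt b c, .alt hb hc, altCongr hb' hc'⟩

theorem delay {t : Tm A} (ht : HasBasicForm γ Ax r t) : HasBasicForm γ Ax r (.delay t) :=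
  let ⟨b, hb, hb'⟩ := ht; ⟨.delay b, .delay hb, delayCongr hb'⟩

theorem bind {op : Tm A → Tm A} (hop : ∀ {t t'}, t ≐ t' → op t ≐ op t')
    (h : ∀ {b}, Basic b → HasBasicForm γ Ax r (op b)) {t : Tm A}
    (ht : HasBasicForm γ Ax r t) : HasBasicForm γ Ax r (op t) :=
  let ⟨_, hb, hb'⟩ := ht; of_deriv (hop hb') (h hb)

theorem bind₂ {op : Tm A → Tm A → Tm A}
    (hop : ∀ {t t' u u'}, t ≐ t' → u ≐ u' → op t u ≐ op t' u')
    (h : ∀ {b c}, Basic b → Basic c → HasBasicForm γ Ax r (op b c)) {t u : Tm A}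
    (ht : HasBasicForm γ Ax r t) (hu : HasBasicForm γ Ax r u) : HasBasicForm γ Ax r (op t u) :=
  let ⟨_, hb, hb'⟩ := ht; let ⟨_, hc, hc'⟩ := hu; of_deriv (hop hb' hc') (h hb hc)

theorem seq {s t : Tm A} (hs : Basic s) (ht : Basic t) : HasBasicForm γ Ax r (.seq s t) := by
  induction hs with
  | und a =>
    by_cases ha : a = .delta
    · subst ha; exact of_deriv (A7DR t) (of_basic (.und _))
    · exact of_basic (.pre a ha ht)
  | pre a ha _ ih =>
    obtain ⟨b, hb, hb'⟩ := ih
    exact of_deriv ((A5 _ _ t).trans (seqCongr (refl _) hb')) (of_basic (.pre a ha hb))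
  | delay _ ih => exact of_deriv (DRT2 _ t) ih.delay
  | alt _ _ ih₁ ih₂ => exact of_deriv (A4 _ _ t) (ih₁.alt ih₂)

theorem seq_und (a : ATD A) {t : Tm A} (ht : HasBasicForm γ Ax r t) :
    HasBasicForm γ Ax r (.seq (.und a) t) :=
  bind (seqCongr (refl _)) (seq (.und a)) ht

theorem par {t u : Tm A} (h₁ : HasBasicForm γ Ax r (.lm t u))
    (h₂ : HasBasicForm γ Ax r (.lm u t)) (h₃ : HasBasicForm γ Ax r (.cm t u)) :
    HasBasicForm γ Ax r (.par t u) :=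
  of_deriv (CM1 t u) ((h₁.alt h₂).alt h₃)

theorem timeout {t : Tm A} (ht : Basic t) : HasBasicForm γ Ax r (.timeout t) := by
  induction ht with
  | und a => exact of_deriv (DRTO1 a) (of_basic (.und a))
  | pre a ha ht => exact of_deriv (timeout_seq_und a _) (of_basic (.pre a ha ht))
  | delay => exact of_deriv (DRTO4 _) (of_basic (.und _))
  | alt _ _ ih₁ ih₂ => exact of_deriv (DRTO2 _ _) (ih₁.alt ih₂)

theorem encap_und (H : Set A) (a : ATD A) : ∃ g, .encap H (.und a) ≐ .und g := by
  cases a with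
  | act b =>
    by_cases hb : b ∈ H
    · exact ⟨_, D2DR b H hb⟩
    · exact ⟨_, D1DR _ H fun _ h => ATD.act.inj h ▸ hb⟩
  | tau => exact ⟨_, D1DR _ H fun _ h => nomatch h⟩
  | delta => exact ⟨_, D1DR _ H fun _ h => nomatch h⟩

theorem abstr_und (I : Set A) (a : ATD A) : ∃ g, .abstr I (.und a) ≐ .und g := by
  cases a with
  | act b =>
    by_cases hb : b ∈ I
    · exact ⟨_, TI2DR b I hb⟩
    · exact ⟨_, TI1DR _ I fun _ h => ATD.act.inj h ▸ hb⟩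
  | tau => exact ⟨_, TI1DR _ I fun _ h => nomatch h⟩
  | delta => exact ⟨_, TI1DR _ I fun _ h => nomatch h⟩

theorem encap (H : Set A) {t : Tm A} (ht : Basic t) : HasBasicForm γ Ax r (.encap H t) := by
  induction ht with
  | und a =>
    obtain ⟨g, hg⟩ := encap_und (γ := γ) (Ax := Ax) (r := r) H a
    exact of_deriv hg (of_basic (.und g))
  | pre a _ _ ih =>
    obtain ⟨g, hg⟩ := encap_und (γ := γ) (Ax := Ax) (r := r) H a
    exact of_deriv ((D4 _ _ _).trans (seqCongr hg (refl _))) (seq_und g ih)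
  | delay _ ih => exact of_deriv (DRD _ _) ih.delay
  | alt _ _ ih₁ ih₂ => exact of_deriv (D3 _ _ _) (ih₁.alt ih₂)

theorem abstr (I : Set A) {t : Tm A} (ht : Basic t) : HasBasicForm γ Ax r (.abstr I t) := by
  induction ht with
  | und a =>
    obtain ⟨g, hg⟩ := abstr_und (γ := γ) (Ax := Ax) (r := r) I a
    exact of_deriv hg (of_basic (.und g))
  | pre a _ _ ih =>
    obtain ⟨g, hg⟩ := abstr_und (γ := γ) (Ax := Ax) (r := r) I a
    exact of_deriv ((TI4 _ _ _).trans (seqCongr hg (refl _))) (seq_und g ih)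
  | delay _ ih => exact of_deriv (DRTI _ _) ih.delay
  | alt _ _ ih₁ ih₂ => exact of_deriv (TI3 _ _ _) (ih₁.alt ih₂)

theorem par_of_lt {n : ℕ} (ih : ∀ {b c : Tm A}, Basic b → Basic c → sizeOf b + sizeOf c < n →
      HasBasicForm γ Ax r (.lm b c) ∧ HasBasicForm γ Ax r (.cm b c))
    {t u : Tm A} (ht : Basic t) (hu : Basic u) (h : sizeOf t + sizeOf u < n) :
    HasBasicForm γ Ax r (.par t u) :=
  par (ih ht hu h).1 (ih hu ht (by omega)).1 (ih ht hu h).2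

section Elimination

variable {b c : Tm A} (hb : Basic b) (hc : Basic c)
  (ih : ∀ {b' c' : Tm A}, Basic b' → Basic c' → sizeOf b' + sizeOf c' < sizeOf b + sizeOf c →
    HasBasicForm γ Ax r (.lm b' c') ∧ HasBasicForm γ Ax r (.cm b' c'))
include hb hc ih

theorem lm_of_lt : HasBasicForm γ Ax r (.lm b c) := by
  cases hb with
  | und a => exact of_deriv (CM2DR a c) (seq (.und a) hc)
  | pre a ha ht =>
    exact of_deriv (CM3DR a _ c) (seq_und a (par_of_lt ih ht hc (by simp +arith)))
  | @delay t ht =>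
    rcases hc.timeout_or_timeout_add_delay (γ := γ) (Ax := Ax) (r := r) with
      ⟨p, hp⟩ | ⟨p, q, hq, hqc, hp⟩
    · exact of_deriv ((lmCongr (refl _) hp).trans (DRCM1 t p)) (of_basic (.und _))
    · exact of_deriv ((lmCongr (refl _) hp).trans (DRCM2 t p q))
        (ih ht hq (by simp +arith [hqc.le])).1.delay
  | alt hb₁ hb₂ =>
    exact of_deriv (CM4 _ _ c)
      ((ih hb₁ hc (by simp +arith)).1.alt (ih hb₂ hc (by simp +arith)).1)

theorem cm_of_lt : HasBasicForm γ Ax r (.cm b c) := by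
  cases hb with
  | alt hb₁ hb₂ =>
    exact of_deriv (CM8 _ _ c)
      ((ih hb₁ hc (by simp +arith)).2.alt (ih hb₂ hc (by simp +arith)).2)
  | und a =>
    cases hc with
    | und a' => exact of_deriv (CFDR a a') (of_basic (.und _))
    | pre a' _ hv =>
      exact of_deriv ((CM6DR a a' _).trans (seqCongr (CFDR a a') (refl _))) (seq (.und _) hv)
    | delay => exact of_deriv (cm_delay_of_timeout (DRTO1 a).symm _) (of_basic (.und _))
    | alt hc₁ hc₂ =>
      exact of_deriv (CM9 _ _ _)
        ((ih (.und a) hc₁ (by simp +arith)).2.alt (ih (.und a) hc₂ (by simp +arith)).2)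
  | pre a ha ht =>
    cases hc with
    | und a' =>
      exact of_deriv ((CM5DR a a' _).trans (seqCongr (CFDR a a') (refl _))) (seq (.und _) ht)
    | pre a' _ hv =>
      exact of_deriv ((CM7DR a a' _ _).trans (seqCongr (CFDR a a') (refl _)))
        (seq_und _ (par_of_lt ih ht hv (by simp +arith)))
    | delay =>
      exact of_deriv (cm_delay_of_timeout (timeout_seq_und a _).symm _) (of_basic (.und _))
    | alt hc₁ hc₂ =>
      exact of_deriv (CM9 _ _ _) ((ih (.pre a ha ht) hc₁ (by simp +arith)).2.alt
        (ih (.pre a ha ht) hc₂ (by simp +arith)).2)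
  | @delay t ht =>
    cases hc with
    | und a' => exact of_deriv (delay_cm_of_timeout (DRTO1 a').symm _) (of_basic (.und _))
    | pre a' _ _ =>
      exact of_deriv (delay_cm_of_timeout (timeout_seq_und a' _).symm _) (of_basic (.und _))
    | delay hv => exact of_deriv (DRCM5 _ _) (ih ht hv (by simp +arith)).2.delay
    | alt hc₁ hc₂ =>
      exact of_deriv (CM9 _ _ _)
        ((ih (.delay ht) hc₁ (by simp +arith)).2.alt (ih (.delay ht) hc₂ (by simp +arith)).2)

end Elimination

theorem lm_and_cm {b c : Tm A} (hb : Basic b) (hc : Basic c) :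
    HasBasicForm γ Ax r (.lm b c) ∧ HasBasicForm γ Ax r (.cm b c) :=
  have ih {b' c' : Tm A} (hb' : Basic b') (hc' : Basic c')
      (_ : sizeOf b' + sizeOf c' < sizeOf b + sizeOf c) := lm_and_cm hb' hc'
  ⟨lm_of_lt hb hc ih, cm_of_lt hb hc ih⟩
termination_by sizeOf b + sizeOf c

theorem lm {b c : Tm A} (hb : Basic b) (hc : Basic c) : HasBasicForm γ Ax r (.lm b c) :=
  (lm_and_cm hb hc).1

theorem cm {b c : Tm A} (hb : Basic b) (hc : Basic c) : HasBasicForm γ Ax r (.cm b c) :=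
  (lm_and_cm hb hc).2

theorem _root_.Tm.Plain.hasBasicForm {t : Tm A} (ht : t.Plain) : HasBasicForm γ Ax r t := by
  induction t with
  | und a => exact of_basic (.und a)
  | alt _ _ ih₁ ih₂ => exact (ih₁ ht.1).alt (ih₂ ht.2)
  | seq _ _ ih₁ ih₂ => exact bind₂ seqCongr seq (ih₁ ht.1) (ih₂ ht.2)
  | delay _ ih => exact (ih ht).delay
  | par _ _ ih₁ ih₂ =>
    exact bind₂ parCongr (fun hb hc => par (lm hb hc) (lm hc hb) (cm hb hc))
      (ih₁ ht.1) (ih₂ ht.2)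
  | lm _ _ ih₁ ih₂ => exact bind₂ lmCongr lm (ih₁ ht.1) (ih₂ ht.2)
  | cm _ _ ih₁ ih₂ => exact bind₂ cmCongr cm (ih₁ ht.1) (ih₂ ht.2)
  | encap H _ ih => exact bind (encapCongr H) (encap H) (ih ht)
  | abstr I _ ih => exact bind (abstrCongr I) (abstr I) (ih ht)
  | timeout _ ih => exact bind timeoutCongr timeout (ih ht)
  | var | recc | shift | tfp => exact ht.elim

end HasBasicForm

theorem ATD.gamma_gamma_eq_delta {A : Type} {γ : ATD A → ATD A → ATD A}
    (hcomm : ∀ a b, γ a b = γ b a) (htau : ∀ a, γ .tau a = .delta)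
    (hdelta : ∀ a, γ .delta a = .delta)
    (hhs : ∀ a b c : A, γ (γ (.act a) (.act b)) (.act c) = .delta) (a b c : ATD A) :
    γ (γ a b) c = .delta := by
  have htau' : ∀ a, γ a .tau = .delta := fun a => hcomm a _ ▸ htau a
  have hdelta' : ∀ a, γ a .delta = .delta := fun a => hcomm a _ ▸ hdelta a
  cases a <;> cases b <;> cases c <;> simp only [htau, htau', hdelta, hdelta', hhs]

def CommInert {A : Type} (γ : ATD A → ATD A → ATD A) (Ax : Tm A → Tm A → Prop) (r : Bool)
    (t : Tm A) : Prop :=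
  ∀ d, Basic d → Deriv γ Ax r (.cm t d) (.und .delta)

namespace CommInert

open Deriv

variable {A : Type} {γ : ATD A → ATD A → ATD A} {Ax : Tm A → Tm A → Prop} {r : Bool}

local notation:50 t:51 " ≐ " u:51 => Deriv γ Ax r t u

theorem of_deriv {t t' : Tm A} (h : t ≐ t') (h' : CommInert γ Ax r t') :
    CommInert γ Ax r t :=
  fun d hd => (cmCongr h (refl d)).trans (h' d hd)

theorem alt {t u : Tm A} (ht : CommInert γ Ax r t) (hu : CommInert γ Ax r u) :
    CommInert γ Ax r (.alt t u) :=
  fun d hd => (CM8 t u d).trans ((altCongr (ht d hd) (hu d hd)).trans (A6DR _))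

theorem seq_und {g : ATD A} (hg : ∀ a, γ g a = .delta) (w : Tm A) :
    CommInert γ Ax r (.seq (.und g) w) := by
  have hdead : ∀ a (v : Tm A), .seq (.und (γ g a)) v ≐ .und .delta :=
    fun a v => by rw [hg a]; exact A7DR v
  intro d hd
  induction hd with
  | und a => exact (CM5DR g a w).trans ((seqCongr (CFDR g a) (refl w)).trans (hdead a w))
  | pre a _ _ _ => exact (CM7DR g a w _).trans ((seqCongr (CFDR g a) (refl _)).trans (hdead a _))
  | delay => exact cm_delay_of_timeout (timeout_seq_und g w).symm _
  | alt _ _ ih₁ ih₂ => exact (CM9 _ _ _).trans ((altCongr ih₁ ih₂).trans (A6DR _))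

theorem und {g : ATD A} (hg : ∀ a, γ g a = .delta) : CommInert γ Ax r (.und g) :=
  of_deriv (DRB1 g).symm (seq_und hg _)

theorem cm_seq_und (hγ : ∀ a b c, γ (γ a b) c = .delta) (hδ : ∀ a, γ .delta a = .delta)
    (a : ATD A) (t : Tm A) {c : Tm A} (hc : Basic c) :
    CommInert γ Ax r (.cm (.seq (.und a) t) c) := by
  induction hc with
  | und a' =>
    exact of_deriv ((CM5DR a a' t).trans (seqCongr (CFDR a a') (refl t))) (seq_und (hγ a a') t)
  | pre a' _ _ _ =>
    exact of_deriv ((CM7DR a a' t _).trans (seqCongr (CFDR a a') (refl _)))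
      (seq_und (hγ a a') _)
  | delay => exact of_deriv (cm_delay_of_timeout (timeout_seq_und a t).symm _) (und hδ)
  | alt _ _ ih₁ ih₂ => exact of_deriv (CM9 _ _ _) (ih₁.alt ih₂)

theorem cm_und (hγ : ∀ a b c, γ (γ a b) c = .delta) (hδ : ∀ a, γ .delta a = .delta)
    (a : ATD A) {c : Tm A} (hc : Basic c) : CommInert γ Ax r (.cm (.und a) c) :=
  of_deriv (cmCongr (DRB1 a).symm (refl c)) (cm_seq_und hγ hδ a _ hc)

end CommInert

def CmAbsorbed {A : Type} (γ : ATD A → ATD A → ATD A) (Ax : Tm A → Tm A → Prop) (r : Bool)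
    (u d : Tm A) : Prop :=
  Deriv.Summand γ Ax r (.cm u d) (.lm u d)

namespace CmAbsorbed

open Deriv

variable {A : Type} {γ : ATD A → ATD A → ATD A} {Ax : Tm A → Tm A → Prop} {r : Bool}

local notation:50 t:51 " ≐ " u:51 => Deriv γ Ax r t u

theorem congr {u u' d : Tm A} (h : u ≐ u') (hu : CmAbsorbed γ Ax r u d) :
    CmAbsorbed γ Ax r u' d :=
  Summand.congr (cmCongr h (refl d)) (lmCongr h (refl d)) hu

theorem alt {u₁ u₂ d : Tm A} (h₁ : CmAbsorbed γ Ax r u₁ d)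
    (h₂ : CmAbsorbed γ Ax r u₂ d) :
    CmAbsorbed γ Ax r (.alt u₁ u₂) d :=
  Summand.congr (CM8 u₁ u₂ d).symm (CM4 u₁ u₂ d).symm (Summand.alt_mono h₁ h₂)

theorem of_cm_eq_delta {u d : Tm A} (h : .cm u d ≐ .und .delta) : CmAbsorbed γ Ax r u d :=
  Summand.congr h.symm (refl _) (Summand.delta _)

theorem cm_of_basic (hγ : ∀ a b c, γ (γ a b) c = .delta) (hδ : ∀ a, γ .delta a = .delta)
    {b c d : Tm A} (hb : Basic b) (hc : Basic c) (hd : Basic d) :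
    CmAbsorbed γ Ax r (.cm b c) d := by
  induction hb generalizing c d with
  | und a => exact of_cm_eq_delta (CommInert.cm_und hγ hδ a hc d hd)
  | pre a _ _ _ => exact of_cm_eq_delta (CommInert.cm_seq_und hγ hδ a _ hc d hd)
  | alt _ _ ih₁ ih₂ => exact ((ih₁ hc hd).alt (ih₂ hc hd)).congr (CM8 _ _ _).symm
  | @delay qb _ ih =>
    have hinert : ∀ {c p : Tm A}, c ≐ .timeout p → CommInert γ Ax r (.cm (.delay qb) c) :=
      fun hp => CommInert.of_deriv (delay_cm_of_timeout hp qb) (CommInert.und hδ)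
    induction hc generalizing d with
    | und a => exact of_cm_eq_delta (hinert (DRTO1 a).symm d hd)
    | pre a _ _ _ => exact of_cm_eq_delta (hinert (timeout_seq_und a _).symm d hd)
    | alt _ _ ih₁ ih₂ => exact ((ih₁ hd).alt (ih₂ hd)).congr (CM9 _ _ _).symm
    | @delay qc hqc _ =>
      refine congr (DRCM5 qb qc).symm ?_
      rcases hd.timeout_or_timeout_add_delay (γ := γ) (Ax := Ax) (r := r) with
        ⟨p, hp⟩ | ⟨p, q, hq, -, hp⟩
      · exact of_cm_eq_delta (delay_cm_of_timeout hp _)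
      · have hcm : .cm (.delay (.cm qb qc)) d ≐ .delay (.cm (.cm qb qc) q) :=
          calc .cm (.delay (.cm qb qc)) d
              ≐ .alt (.cm (.delay (.cm qb qc)) (.timeout p))
                  (.cm (.delay (.cm qb qc)) (.delay q)) :=
                (cmCongr (refl _) hp).trans (CM9 _ _ _)
            _ ≐ .alt (.und .delta) (.delay (.cm (.cm qb qc) q)) :=
                altCongr (DRCM4 _ _) (DRCM5 _ _)
            _ ≐ .delay (.cm (.cm qb qc) q) := alt_delta_left _
        have hlm : .lm (.delay (.cm qb qc)) d ≐ .delay (.lm (.cm qb qc) q) :=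
          (lmCongr (refl _) hp).trans (DRCM2 _ p q)
        exact Summand.congr hcm.symm hlm.symm (Summand.delay_mono (ih hqc hq))

end CmAbsorbed

theorem CmAbsorbed.cm_of_plain {A : Type} {γ : ATD A → ATD A → ATD A}
    {Ax : Tm A → Tm A → Prop} {r : Bool}
    (hγ : ∀ a b c, γ (γ a b) c = .delta) (hδ : ∀ a, γ .delta a = .delta)
    {X Y Z : Tm A} (hX : X.Plain) (hY : Y.Plain) (hZ : Z.Plain) :
    CmAbsorbed γ Ax r (.cm X Y) Z := by
  obtain ⟨b, hb, hXb⟩ := hX.hasBasicForm (γ := γ) (Ax := Ax) (r := r)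
  obtain ⟨c, hc, hYc⟩ := hY.hasBasicForm (γ := γ) (Ax := Ax) (r := r)
  obtain ⟨d, hd, hZd⟩ := hZ.hasBasicForm (γ := γ) (Ax := Ax) (r := r)
  have hXY := Deriv.cmCongr hXb hYc
  exact Deriv.Summand.congr (Deriv.cmCongr hXY hZd).symm (Deriv.lmCongr hXY hZd).symm
    (cm_of_basic hγ hδ hb hc hd)

namespace List

variable {α : Type}

def picks : List α → List (α × List α)
  | [] => []
  | a :: l => (a, l) :: l.picks.map fun p => (p.1, a :: p.2)

/-- All ways of taking two elements out of `l`, in their order in `l`, with the rest of `l`. -/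
def pairPicks : List α → List (α × α × List α)
  | [] => []
  | a :: l =>
    l.picks.map (fun p => (a, p.1, p.2)) ++ l.pairPicks.map fun q => (q.1, q.2.1, a :: q.2.2)

theorem perm_of_mem_picks {l rest : List α} {i : α} (h : (i, rest) ∈ l.picks) :
    l.Perm (i :: rest) := by
  induction l generalizing rest with
  | nil => simp [picks] at h
  | cons a l ih =>
    simp only [picks, mem_cons, Prod.mk.injEq, mem_map, Prod.exists] at h
    obtain ⟨rfl, rfl⟩ | ⟨j, rest', h, rfl, rfl⟩ := h
    · exact Perm.refl _
    · exact ((ih h).cons a).trans (Perm.swap _ _ _)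

theorem exists_mem_picks_of_mem_pairPicks {l rest : List α} {i j : α}
    (h : (i, j, rest) ∈ l.pairPicks) :
    ∃ rest', (i, rest') ∈ l.picks ∧ (j, rest) ∈ rest'.picks := by
  induction l generalizing rest with
  | nil => simp [pairPicks] at h
  | cons a l ih =>
    simp only [pairPicks, mem_append, mem_map, Prod.mk.injEq, Prod.exists] at h
    obtain ⟨j', rest', h, rfl, rfl, rfl⟩ | ⟨i', j', rest', h, rfl, rfl, rfl⟩ := h
    · exact ⟨l, by simp [picks], h⟩
    · obtain ⟨rest'', h₁, h₂⟩ := ih h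
      refine ⟨a :: rest'', ?_, ?_⟩ <;> simp only [picks, mem_cons, mem_map] <;> right
      · exact ⟨_, h₁, rfl⟩
      · exact ⟨_, h₂, rfl⟩

theorem picks_ne_nil {l : List α} (h : l ≠ []) : l.picks ≠ [] := by
  cases l with
  | nil => exact absurd rfl h
  | cons => simp [picks]

theorem pairPicks_ne_nil {l : List α} (h : 2 ≤ l.length) : l.pairPicks ≠ [] := by
  match l, h with
  | _ :: _ :: _, _ => simp [pairPicks, picks]

theorem picks_eq_map_filter [DecidableEq α] {l : List α} (h : l.Nodup) :
    l.picks = l.map fun i => (i, l.filter fun j => decide (j ≠ i)) := by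
  induction l with
  | nil => rfl
  | cons a l ih =>
    obtain ⟨ha, hl⟩ := nodup_cons.mp h
    simp only [picks, ih hl, map_cons, map_map, filter_cons, ne_eq, not_true_eq_false,
      decide_false, Bool.false_eq_true, ↓reduceIte, cons.injEq, Prod.mk.injEq, true_and]
    refine ⟨(filter_eq_self.mpr fun j hj => ?_).symm, map_congr_left fun i hi => ?_⟩
    · simpa using ne_of_mem_of_not_mem hj ha
    · simp [(ne_of_mem_of_not_mem hi ha).symm]

theorem pairPicks_eq_flatMap_filter [LinearOrder α] {l : List α} (h : l.Pairwise (· < ·)) :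
    l.pairPicks = l.flatMap fun i => (l.filter fun j => decide (i < j)).map
      fun j => (i, j, l.filter fun k => decide (k ≠ i ∧ k ≠ j)) := by
  induction l with
  | nil => rfl
  | cons a l ih =>
    obtain ⟨ha, hl⟩ := pairwise_cons.mp h
    have hne : ∀ i ∈ l, a ≠ i := fun i hi => (ha i hi).ne
    rw [pairPicks, ih hl, picks_eq_map_filter (hl.imp ne_of_lt), flatMap_cons, map_flatMap]
    congr 1
    · simp only [filter_cons, lt_self_iff_false, decide_false, Bool.false_eq_true, ↓reduceIte,
        map_map]
      rw [filter_eq_self.mpr (by simpa using ha)]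
      refine map_congr_left fun j hj => ?_
      simp only [Function.comp_apply, ne_eq, not_true_eq_false, false_and, decide_false,
        Bool.false_eq_true, ↓reduceIte, Prod.mk.injEq, true_and]
      exact filter_congr fun k hk => by simp [(hne k hk).symm]
    · refine flatMap_congr fun i hi => ?_
      rw [filter_cons_of_neg (by simpa using (ha i hi).le), map_map]
      refine map_congr_left fun j hj => ?_
      have hj' : j ∈ l := (mem_filter.mp hj).1
      simp [hne i hi, hne j hj']

end List

theorem parList_cons_of_ne_nil {A : Type} (t : Tm A) {ts : List (Tm A)} (h : ts ≠ []) :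
    parList (t :: ts) = .par t (parList ts) := by
  cases ts with
  | nil => exact absurd rfl h
  | cons => rfl

/-- `t ⌊ (u₁ ∥ ⋯ ∥ uₖ)`, read as `t` itself when `k = 0` rather than `t ⌊ δ`: with this
convention the expansion also holds for two components, with summand `x₁ | x₂`. -/
def lmPar {A : Type} (t : Tm A) : List (Tm A) → Tm A
  | [] => t
  | u :: us => .lm t (parList (u :: us))

theorem lmPar_of_ne_nil {A : Type} (t : Tm A) {us : List (Tm A)} (h : us ≠ []) :
    lmPar t us = .lm t (parList us) := by
  cases us with
  | nil => exact absurd rfl h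
  | cons => rfl

namespace SCAx

open Deriv

variable {A : Type} {γ : ATD A → ATD A → ATD A} {r : Bool}

local notation:50 t:51 " ≐ " u:51 => Deriv γ SCAx r t u

theorem parList_perm {l l' : List (Tm A)} (h : l.Perm l') : parList l ≐ parList l' := by
  induction h with
  | nil => exact refl _
  | @cons t l₁ l₂ h ih =>
    rcases eq_or_ne l₁ [] with rfl | hl₁
    · rw [List.nil_perm.mp h]; exact refl _
    rw [parList_cons_of_ne_nil t hl₁,
      parList_cons_of_ne_nil t fun hl₂ => hl₁ (hl₂ ▸ h).eq_nil]
    exact parCongr (refl t) ih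
  | swap t u l =>
    rcases eq_or_ne l [] with rfl | hl
    · exact extra (parComm u t)
    rw [parList_cons_of_ne_nil _ (List.cons_ne_nil _ _), parList_cons_of_ne_nil _ hl,
      parList_cons_of_ne_nil _ (List.cons_ne_nil _ _), parList_cons_of_ne_nil _ hl]
    exact (extra (parAssoc u t _)).symm.trans
      ((parCongr (extra (parComm u t)) (refl _)).trans (extra (parAssoc t u _)))
  | trans _ _ ih₁ ih₂ => exact ih₁.trans ih₂

theorem lm_lmPar (t u : Tm A) (us : List (Tm A)) : .lm (lmPar t us) u ≐ lmPar t (u :: us) := by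
  cases us with
  | nil => exact refl _
  | cons v vs =>
    exact (extra (lmAssoc t _ u)).trans (lmCongr (refl t) (extra (parComm _ u)))

theorem cm_lmPar (u t : Tm A) (us : List (Tm A)) : .cm u (lmPar t us) ≐ lmPar (.cm u t) us := by
  cases us with
  | nil => exact refl _
  | cons v vs => exact extra (cmLm u t _)

theorem lmPar_perm (t : Tm A) {us vs : List (Tm A)} (h : us.Perm vs) :
    lmPar t us ≐ lmPar t vs := by
  rcases eq_or_ne us [] with rfl | hus
  · rw [List.nil_perm.mp h]; exact refl _
  rw [lmPar_of_ne_nil t hus, lmPar_of_ne_nil t fun hvs => hus (hvs ▸ h).eq_nil]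
  exact lmCongr (refl t) (parList_perm h)

theorem summand_lmPar_cm_cm (hγ : ∀ a b c, γ (γ a b) c = .delta)
    (hδ : ∀ a, γ .delta a = .delta)
    {X Y Z : Tm A} (hX : X.Plain) (hY : Y.Plain) (hZ : Z.Plain) (us : List (Tm A)) :
    Summand γ SCAx r (lmPar (.cm X (.cm Y Z)) us) (lmPar (.cm X Y) (Z :: us)) := by
  have h : Summand γ SCAx r (.cm X (.cm Y Z)) (.lm (.cm X Y) Z) :=
    Summand.congr (extra (cmAssoc X Y Z)) (refl _) (CmAbsorbed.cm_of_plain hγ hδ hX hY hZ)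
  cases us with
  | nil => exact h
  | cons v vs => exact Summand.congr (refl _) (extra (lmAssoc _ Z _)) (Summand.lm_mono h _)

end SCAx

section Expansion

variable {A ι : Type} (x : ι → Tm A)

def pickSum (f : ι → Tm A) (l : List ι) : Tm A :=
  altList (l.picks.map fun p => lmPar (f p.1) (p.2.map x))

def pairPickSum (f : ι → ι → Tm A) (l : List ι) : Tm A :=
  altList (l.pairPicks.map fun q => lmPar (f q.1 q.2.1) (q.2.2.map x))

namespace SCAx

open Deriv List

variable {γ : ATD A → ATD A → ATD A} {r : Bool}

local notation:50 t:51 " ≐ " u:51 => Deriv γ SCAx r t u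

theorem lm_pickSum (f : ι → Tm A) (l : List ι) (a : ι) :
    .lm (pickSum x f l) (x a) ≐ altList (l.picks.map fun p => lmPar (f p.1) ((a :: p.2).map x)) :=
  (lm_altList _ _).trans (by rw [map_map]; exact altList_map_congr fun p _ => lm_lmPar _ _ _)

theorem lm_pairPickSum (f : ι → ι → Tm A) (l : List ι) (a : ι) :
    .lm (pairPickSum x f l) (x a) ≐
      altList (l.pairPicks.map fun q => lmPar (f q.1 q.2.1) ((a :: q.2.2).map x)) :=
  (lm_altList _ _).trans (by rw [map_map]; exact altList_map_congr fun q _ => lm_lmPar _ _ _)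

theorem cm_pickSum (f : ι → Tm A) {l : List ι} (hl : l ≠ []) (X : Tm A) :
    .cm X (pickSum x f l) ≐ pickSum x (fun i => .cm X (f i)) l :=
  (cm_altList (by simpa using picks_ne_nil hl) X).trans
    (by rw [map_map]; exact altList_map_congr fun p _ => cm_lmPar _ _ _)

theorem cm_pairPickSum (f : ι → ι → Tm A) {l : List ι} (hl : 2 ≤ l.length) (X : Tm A) :
    .cm X (pairPickSum x f l) ≐ pairPickSum x (fun i j => .cm X (f i j)) l :=
  (cm_altList (by simpa using pairPicks_ne_nil hl) X).trans
    (by rw [map_map]; exact altList_map_congr fun q _ => cm_lmPar _ _ _)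

theorem pickSum_cons (f : ι → Tm A) (a : ι) (l : List ι) :
    pickSum x f (a :: l) ≐ .alt (lmPar (f a) (l.map x))
      (altList (l.picks.map fun p => lmPar (f p.1) ((a :: p.2).map x))) := by
  rw [pickSum, picks, map_cons, map_map]
  exact altList_cons _ _

theorem pairPickSum_cons (f : ι → ι → Tm A) (a : ι) (l : List ι) :
    pairPickSum x f (a :: l) ≐ .alt (pickSum x (f a) l)
      (altList (l.pairPicks.map fun q => lmPar (f q.1 q.2.1) ((a :: q.2.2).map x))) := by
  rw [pairPickSum, pairPicks, map_append, map_map, map_map]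
  exact altList_append _ _

theorem parList_cons_expansion (hγ : ∀ a b c, γ (γ a b) c = .delta)
    (hδ : ∀ a, γ .delta a = .delta) (hx : ∀ i, (x i).Plain) {a : ι} {l : List ι}
    (hl : 2 ≤ l.length)
    (ih : parList (l.map x) ≐
      .alt (pickSum x x l) (pairPickSum x (fun i j => .cm (x i) (x j)) l)) :
    parList ((a :: l).map x) ≐
      .alt (pickSum x x (a :: l)) (pairPickSum x (fun i j => .cm (x i) (x j)) (a :: l)) := by
  have hl₀ : l ≠ [] := ne_nil_of_length_pos (by omega)
  set X := x a
  set P := parList (l.map x)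
  set T₁ := altList (l.picks.map fun p => lmPar (x p.1) ((a :: p.2).map x))
  set T₂ := altList (l.pairPicks.map fun q => lmPar (.cm (x q.1) (x q.2.1)) ((a :: q.2.2).map x))
  set T₃ := pickSum x (fun i => .cm X (x i)) l
  set J := pairPickSum x (fun i j => .cm X (.cm (x i) (x j))) l
  have hlm : .lm P X ≐ .alt T₁ T₂ :=
    (lmCongr ih (refl X)).trans ((CM4 _ _ _).trans (altCongr (lm_pickSum ..) (lm_pairPickSum ..)))
  have hcm : .cm X P ≐ .alt T₃ J :=
    (cmCongr (refl X) ih).trans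
      ((CM9 _ _ _).trans (altCongr (cm_pickSum x _ hl₀ X) (cm_pairPickSum x _ hl X)))
  -- `X | (xᵢ | xⱼ) ⌊ ∥rest` is absorbed by the summand `(X | xᵢ) ⌊ ∥(xⱼ :: rest)` of `T₃`
  have hJ : Summand γ SCAx r J T₃ := summand_altList fun t ht => by
    obtain ⟨⟨i, j, rest⟩, hq, rfl⟩ := mem_map.mp ht
    obtain ⟨rest', hi, hj⟩ := exists_mem_picks_of_mem_pairPicks hq
    exact (summand_lmPar_cm_cm hγ hδ (hx a) (hx i) (hx j) _).trans
      (Summand.congr (lmPar_perm _ ((perm_of_mem_picks hj).map x)) (refl _)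
        (summand_altList_of_mem (mem_map.mpr ⟨(i, rest'), hi, rfl⟩)))
  calc parList ((a :: l).map x) = .par X P := parList_cons_of_ne_nil _ (by simpa using hl₀)
    _ ≐ .alt (.alt (.lm X P) (.lm P X)) (.cm X P) := CM1 X P
    _ ≐ .alt (.alt (.lm X P) (.alt T₁ T₂)) (.alt T₃ J) :=
      altCongr (altCongr (refl _) hlm) hcm
    _ ≐ .alt (.alt (.lm X P) T₁) (.alt T₃ T₂) := alt_shuffle_of_summand hJ
    _ ≐ _ := by
      rw [← lmPar_of_ne_nil X (by simpa using hl₀)]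
      exact (altCongr (pickSum_cons x x a l)
        (pairPickSum_cons x (fun i j => .cm (x i) (x j)) a l)).symm

theorem parList_expansion (hγ : ∀ a b c, γ (γ a b) c = .delta)
    (hδ : ∀ a, γ .delta a = .delta)
    (hx : ∀ i, (x i).Plain) {l : List ι} (hl : 2 ≤ l.length) :
    parList (l.map x) ≐ .alt (pickSum x x l) (pairPickSum x (fun i j => .cm (x i) (x j)) l) := by
  induction l with
  | nil => simp at hl
  | cons a l ih =>
    rcases Nat.lt_or_ge l.length 2 with hl' | hl'
    · obtain ⟨b, rfl⟩ : ∃ b, l = [b] := by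
        match l, hl, hl' with
        | [b], _, _ => exact ⟨b, rfl⟩
      exact CM1 (x a) (x b)
    · exact parList_cons_expansion x hγ hδ hx hl' (ih hl')

end SCAx

end Expansion

theorem expansion_theorem_general {A : Type} (γ : ATD A → ATD A → ATD A)
    (hγcomm : ∀ a b, γ a b = γ b a)
    (hγtau : ∀ a, γ ATD.tau a = ATD.delta)
    (hγdelta : ∀ a, γ ATD.delta a = ATD.delta)
    (hhandshaking : ∀ a b c : A, γ (γ (.act a) (.act b)) (.act c) = ATD.delta)
    (n : ℕ) (hn : n > 2) (x : Fin n → Tm A) (hx : ∀ i, Tm.Plain (x i)) :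
    Deriv γ SCAx false
      (parList ((List.finRange n).map x))
      (.alt
        (altList ((List.finRange n).map (fun i =>
          .lm (x i) (parList (((List.finRange n).filter
            (fun j => decide (j ≠ i))).map x)))))
        (altList ((List.finRange n).flatMap (fun i =>
          ((List.finRange n).filter (fun j => decide (i < j))).map (fun j =>
            Tm.lm (.cm (x i) (x j)) (parList (((List.finRange n).filter
              (fun k => decide (k ≠ i ∧ k ≠ j))).map x))))))) := by
  have h := SCAx.parList_expansion (γ := γ) (r := false) x
    (ATD.gamma_gamma_eq_delta hγcomm hγtau hγdelta hhandshaking) hγdelta hx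
    (l := List.finRange n) (by simp; omega)
  rw [pickSum, pairPickSum, List.picks_eq_map_filter (List.nodup_finRange n),
    List.pairPicks_eq_flatMap_filter (List.pairwise_lt_finRange n)] at h
  simp only [List.map_map, List.map_flatMap, Function.comp_def] at h
  simpa (disch := first
    | simpa using Fin.exists_ne_and_ne_of_two_lt _ _ hn
    | simpa using (Fin.exists_ne_and_ne_of_two_lt _ ⟨0, by omega⟩ hn).imp fun _ => And.left)
    only [lmPar_of_ne_nil] using h

/-- The handshaking expansion theorem for ACP_drt^τ: under handshaking
communication, with the axioms of standard concurrency and the handshaking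
axiom, for every n > 2 the expansion
x₁ ∥ ⋯ ∥ xₙ = Σᵢ xᵢ ⌊ (∥_{j≠i} xⱼ) + Σ_{i<j} (xᵢ | xⱼ) ⌊ (∥_{k≠i,k≠j} xₖ)
is derivable. -/
theorem expansion_theorem {A : Type} [Fintype A] (γ : ATD A → ATD A → ATD A)
    (hγcomm : ∀ a b, γ a b = γ b a)
    (hγassoc : ∀ a b c, γ (γ a b) c = γ a (γ b c))
    (hγtau : ∀ a, γ ATD.tau a = ATD.delta)
    (hγdelta : ∀ a, γ ATD.delta a = ATD.delta)
    (hhandshaking : ∀ a b c : A, γ (γ (.act a) (.act b)) (.act c) = ATD.delta)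
    (n : ℕ) (hn : n > 2) (x : Fin n → Tm A) (hx : ∀ i, Tm.Plain (x i)) :
    Deriv γ SCAx false
      (parList ((List.finRange n).map x))
      (.alt
        (altList ((List.finRange n).map (fun i =>
          .lm (x i) (parList (((List.finRange n).filter
            (fun j => decide (j ≠ i))).map x)))))
        (altList ((List.finRange n).flatMap (fun i =>
          ((List.finRange n).filter (fun j => decide (i < j))).map (fun j =>
            Tm.lm (.cm (x i) (x j)) (parList (((List.finRange n).filter
              (fun k => decide (k ≠ i ∧ k ≠ j))).map x))))))) :=
  expansion_theorem_general γ hγcomm hγtau hγdelta hhandshaking n hn x hx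
end

section
/- Elimination of nested recursion: for each recursion constant ⟨X|E⟩ of ACP_drt^τ+REC (where E is a guarded recursive specification possibly containing recursion constants), there exists a guarded recursive specification E' containing no recursion constants such that ⟨X|E⟩ = ⟨X|E'⟩ is derivable from the axioms of ACP_drt^τ+REC (i.e., from RDP and RSP together with the ACP_drt^τ axioms). -/
set_option autoImplicit true

/-! ### Auxiliary machinery for the elimination of nested recursion -/

namespace NestedRec

variable {A : Type}

/-- The default (degenerate) specification. -/
def D0 : ℕ → Tm A := fun _ => .und .delta

/-- The recursive specification sitting at a given address inside a term
(addresses descend into the term tree; the address must end exactly at a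
recursion constant). -/
def reccAt : Tm A → List ℕ → Option (ℕ → Tm A)
  | .recc F _, [] => some F
  | .alt t _, 0 :: r => reccAt t r
  | .alt _ u, (_+1) :: r => reccAt u r
  | .seq t _, 0 :: r => reccAt t r
  | .seq _ u, (_+1) :: r => reccAt u r
  | .par t _, 0 :: r => reccAt t r
  | .par _ u, (_+1) :: r => reccAt u r
  | .lm t _, 0 :: r => reccAt t r
  | .lm _ u, (_+1) :: r => reccAt u r
  | .cm t _, 0 :: r => reccAt t r
  | .cm _ u, (_+1) :: r => reccAt u r
  | .delay t, _ :: r => reccAt t r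
  | .encap _ t, _ :: r => reccAt t r
  | .abstr _ t, _ :: r => reccAt t r
  | .timeout t, _ :: r => reccAt t r
  | .shift t, _ :: r => reccAt t r
  | .tfp t, _ :: r => reccAt t r
  | _, _ => none

/-- The specification reached from `F` by following a path of
(variable, address) hops. -/
def specAt : (ℕ → Tm A) → List (ℕ × List ℕ) → (ℕ → Tm A)
  | F, [] => F
  | F, (Y, a) :: rest => specAt ((reccAt (F Y) a).getD D0) rest

/-- Flattening of a term: variables are re-coded via `enc` (tagged with the
current path) and every recursion constant is inlined by unfolding once and
flattening the unfolding at the extended path. -/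
def flat (enc : List (ℕ × List ℕ) × ℕ → ℕ) :
    List (ℕ × List ℕ) → ℕ → List ℕ → Tm A → Tm A
  | _, _, _, .und a => .und a
  | p, Y, c, .alt t u => .alt (flat enc p Y (c ++ [0]) t) (flat enc p Y (c ++ [1]) u)
  | p, Y, c, .seq t u => .seq (flat enc p Y (c ++ [0]) t) (flat enc p Y (c ++ [1]) u)
  | p, Y, c, .delay t => .delay (flat enc p Y (c ++ [0]) t)
  | p, Y, c, .par t u => .par (flat enc p Y (c ++ [0]) t) (flat enc p Y (c ++ [1]) u)
  | p, Y, c, .lm t u => .lm (flat enc p Y (c ++ [0]) t) (flat enc p Y (c ++ [1]) u)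
  | p, Y, c, .cm t u => .cm (flat enc p Y (c ++ [0]) t) (flat enc p Y (c ++ [1]) u)
  | p, Y, c, .encap H t => .encap H (flat enc p Y (c ++ [0]) t)
  | p, Y, c, .abstr I t => .abstr I (flat enc p Y (c ++ [0]) t)
  | p, Y, c, .timeout t => .timeout (flat enc p Y (c ++ [0]) t)
  | p, _, _, .var W => .var (enc (p, W))
  | p, Y, c, .recc F Z => flat enc (p ++ [(Y, c)]) Z [] (F Z)
  | p, Y, c, .shift t => .shift (flat enc p Y (c ++ [0]) t)
  | p, Y, c, .tfp t => .tfp (flat enc p Y (c ++ [0]) t)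

/-- Well-formed specification: all bodies guarded and proper. -/
def SpecOK (F : ℕ → Tm A) : Prop := ∀ Y, Tm.Guarded (F Y) ∧ Tm.PT (F Y)

lemma specOK_D0 : SpecOK (D0 : ℕ → Tm A) := fun _ => ⟨trivial, trivial⟩

lemma reccAt_ok : ∀ (t : Tm A) (a : List ℕ) (G : ℕ → Tm A),
    Tm.PT t → reccAt t a = some G → SpecOK G := by
  intro t
  induction t with
  | recc F Z ih =>
      intro a G ht h
      cases a with
      | nil => cases h; exact fun Y => ht Y
      | cons i r => simp [reccAt] at h
  | alt t u iht ihu =>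
      intro a G ht h
      match a with
      | [] => simp [reccAt] at h
      | 0 :: r => exact iht r G ht.1 h
      | (i+1) :: r => exact ihu r G ht.2 h
  | seq t u iht ihu =>
      intro a G ht h
      match a with
      | [] => simp [reccAt] at h
      | 0 :: r => exact iht r G ht.1 h
      | (i+1) :: r => exact ihu r G ht.2 h
  | par t u iht ihu =>
      intro a G ht h
      match a with
      | [] => simp [reccAt] at h
      | 0 :: r => exact iht r G ht.1 h
      | (i+1) :: r => exact ihu r G ht.2 h
  | lm t u iht ihu =>
      intro a G ht h
      match a with
      | [] => simp [reccAt] at h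
      | 0 :: r => exact iht r G ht.1 h
      | (i+1) :: r => exact ihu r G ht.2 h
  | cm t u iht ihu =>
      intro a G ht h
      match a with
      | [] => simp [reccAt] at h
      | 0 :: r => exact iht r G ht.1 h
      | (i+1) :: r => exact ihu r G ht.2 h
  | delay t iht =>
      intro a G ht h
      match a with
      | [] => simp [reccAt] at h
      | i :: r => exact iht r G ht h
  | encap H t iht =>
      intro a G ht h
      match a with
      | [] => simp [reccAt] at h
      | i :: r => exact iht r G ht h
  | abstr I t iht =>
      intro a G ht h
      match a with
      | [] => simp [reccAt] at h
      | i :: r => exact iht r G ht h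
  | timeout t iht =>
      intro a G ht h
      match a with
      | [] => simp [reccAt] at h
      | i :: r => exact iht r G ht h
  | shift t iht => intro a G ht h; exact absurd ht (by simp [Tm.PT])
  | tfp t iht => intro a G ht h; exact absurd ht (by simp [Tm.PT])
  | und b => intro a G ht h; simp [reccAt] at h
  | var W => intro a G ht h; simp [reccAt] at h

lemma specAt_ok : ∀ (p : List (ℕ × List ℕ)) (F : ℕ → Tm A),
    SpecOK F → SpecOK (specAt F p) := by
  intro p
  induction p with
  | nil => intro F hF; exact hF
  | cons s rest ih =>
      intro F hF
      obtain ⟨Y, a⟩ := s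
      apply ih
      rcases h : reccAt (F Y) a with _ | G
      · simpa [h] using specOK_D0
      · have := reccAt_ok (F Y) a G (hF Y).2 h
        simpa [h] using this

lemma specAt_append (p : List (ℕ × List ℕ)) (F : ℕ → Tm A) (Y : ℕ) (a : List ℕ) :
    specAt F (p ++ [(Y, a)]) = (reccAt ((specAt F p) Y) a).getD D0 := by
  induction p generalizing F with
  | nil => simp [specAt]
  | cons s rest ih => obtain ⟨Z, b⟩ := s; simp [specAt, ih]

lemma flat_recFree (enc : List (ℕ × List ℕ) × ℕ → ℕ) :
    ∀ (t : Tm A) (p : List (ℕ × List ℕ)) (Y : ℕ) (c : List ℕ),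
      Tm.RecFree (flat enc p Y c t) := by
  intro t
  induction t with
  | und a => intro p Y c; trivial
  | alt t u iht ihu => intro p Y c; exact ⟨iht _ _ _, ihu _ _ _⟩
  | seq t u iht ihu => intro p Y c; exact ⟨iht _ _ _, ihu _ _ _⟩
  | delay t iht => intro p Y c; exact iht _ _ _
  | par t u iht ihu => intro p Y c; exact ⟨iht _ _ _, ihu _ _ _⟩
  | lm t u iht ihu => intro p Y c; exact ⟨iht _ _ _, ihu _ _ _⟩
  | cm t u iht ihu => intro p Y c; exact ⟨iht _ _ _, ihu _ _ _⟩
  | encap H t iht => intro p Y c; exact iht _ _ _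
  | abstr I t iht => intro p Y c; exact iht _ _ _
  | timeout t iht => intro p Y c; exact iht _ _ _
  | var W => intro p Y c; trivial
  | recc F Z ih => intro p Y c; exact ih Z _ _ _
  | shift t iht => intro p Y c; exact iht _ _ _
  | tfp t iht => intro p Y c; exact iht _ _ _

lemma flat_guarded (enc : List (ℕ × List ℕ) × ℕ → ℕ) :
    ∀ (t : Tm A), Tm.Guarded t → Tm.PT t →
      ∀ (p : List (ℕ × List ℕ)) (Y : ℕ) (c : List ℕ),
        Tm.Guarded (flat enc p Y c t) := by
  intro t
  induction t with
  | und a => intro _ _ p Y c; trivial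
  | alt t u iht ihu =>
      intro hg hp p Y c
      exact ⟨iht hg.1 hp.1 _ _ _, ihu hg.2 hp.2 _ _ _⟩
  | seq t u iht ihu =>
      intro hg hp p Y c
      refine ⟨iht hg.1 hp.1 _ _ _, ?_⟩
      rcases hg.2 with h | ⟨a, rfl⟩
      · exact Or.inl (ihu h hp.2 _ _ _)
      · exact Or.inr ⟨a, rfl⟩
  | delay t iht => intro _ _ p Y c; trivial
  | par t u iht ihu =>
      intro hg hp p Y c
      exact ⟨iht hg.1 hp.1 _ _ _, ihu hg.2 hp.2 _ _ _⟩
  | lm t u iht ihu =>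
      intro hg hp p Y c
      exact ⟨iht hg.1 hp.1 _ _ _, ihu hg.2 hp.2 _ _ _⟩
  | cm t u iht ihu =>
      intro hg hp p Y c
      exact ⟨iht hg.1 hp.1 _ _ _, ihu hg.2 hp.2 _ _ _⟩
  | encap H t iht => intro hg hp p Y c; exact iht hg hp _ _ _
  | abstr I t iht => intro hg hp p Y c; exact absurd hg (by simp [Tm.Guarded])
  | timeout t iht => intro hg hp p Y c; exact iht hg hp _ _ _
  | var W => intro hg _ p Y c; exact absurd hg (by simp [Tm.Guarded])
  | recc F Z ih =>
      intro _ hp p Y c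
      exact ih Z (hp Z).1 (hp Z).2 _ _ _
  | shift t iht => intro _ hp p Y c; exact absurd hp (by simp [Tm.PT])
  | tfp t iht => intro _ hp p Y c; exact absurd hp (by simp [Tm.PT])

/-- Key lemma: the flattening of a subterm of a body of the specification at
path `p`, with recursion constants interpreted by `θ`, is derivably equal to
the corresponding substitution instance. -/
lemma flat_deriv (γ : ATD A → ATD A → ATD A) (E : ℕ → Tm A)
    (e2 : (List (ℕ × List ℕ) × ℕ) ≃ ℕ) (θ : ℕ → Tm A)
    (hθ : ∀ q : List (ℕ × List ℕ) × ℕ, θ (e2 q) = .recc (specAt E q.1) q.2) :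
    ∀ (t : Tm A), Tm.PT t →
      ∀ (p : List (ℕ × List ℕ)) (Y : ℕ) (c : List ℕ),
        (∀ (a : List ℕ) (G : ℕ → Tm A), reccAt t a = some G →
          reccAt ((specAt E p) Y) (c ++ a) = some G) →
        Deriv γ NoAx true (Tm.sub (specAt E p) t) (Tm.asg θ (flat (⇑e2) p Y c t)) := by
  intro t
  induction t with
  | und a => intro _ p Y c _; exact Deriv.refl _
  | alt t u iht ihu =>
      intro hp p Y c hsub
      refine Deriv.altCongr (iht hp.1 p Y (c ++ [0]) ?_) (ihu hp.2 p Y (c ++ [1]) ?_)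
      · intro a G h
        have := hsub (0 :: a) G (by simpa [reccAt] using h)
        simpa [List.append_assoc] using this
      · intro a G h
        have := hsub (1 :: a) G (by simpa [reccAt] using h)
        simpa [List.append_assoc] using this
  | seq t u iht ihu =>
      intro hp p Y c hsub
      refine Deriv.seqCongr (iht hp.1 p Y (c ++ [0]) ?_) (ihu hp.2 p Y (c ++ [1]) ?_)
      · intro a G h
        have := hsub (0 :: a) G (by simpa [reccAt] using h)
        simpa [List.append_assoc] using this
      · intro a G h
        have := hsub (1 :: a) G (by simpa [reccAt] using h)
        simpa [List.append_assoc] using this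
  | delay t iht =>
      intro hp p Y c hsub
      refine Deriv.delayCongr (iht hp p Y (c ++ [0]) ?_)
      intro a G h
      have := hsub (0 :: a) G (by simpa [reccAt] using h)
      simpa [List.append_assoc] using this
  | par t u iht ihu =>
      intro hp p Y c hsub
      refine Deriv.parCongr (iht hp.1 p Y (c ++ [0]) ?_) (ihu hp.2 p Y (c ++ [1]) ?_)
      · intro a G h
        have := hsub (0 :: a) G (by simpa [reccAt] using h)
        simpa [List.append_assoc] using this
      · intro a G h
        have := hsub (1 :: a) G (by simpa [reccAt] using h)
        simpa [List.append_assoc] using this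
  | lm t u iht ihu =>
      intro hp p Y c hsub
      refine Deriv.lmCongr (iht hp.1 p Y (c ++ [0]) ?_) (ihu hp.2 p Y (c ++ [1]) ?_)
      · intro a G h
        have := hsub (0 :: a) G (by simpa [reccAt] using h)
        simpa [List.append_assoc] using this
      · intro a G h
        have := hsub (1 :: a) G (by simpa [reccAt] using h)
        simpa [List.append_assoc] using this
  | cm t u iht ihu =>
      intro hp p Y c hsub
      refine Deriv.cmCongr (iht hp.1 p Y (c ++ [0]) ?_) (ihu hp.2 p Y (c ++ [1]) ?_)
      · intro a G h
        have := hsub (0 :: a) G (by simpa [reccAt] using h)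
        simpa [List.append_assoc] using this
      · intro a G h
        have := hsub (1 :: a) G (by simpa [reccAt] using h)
        simpa [List.append_assoc] using this
  | encap H t iht =>
      intro hp p Y c hsub
      refine Deriv.encapCongr H (iht hp p Y (c ++ [0]) ?_)
      intro a G h
      have := hsub (0 :: a) G (by simpa [reccAt] using h)
      simpa [List.append_assoc] using this
  | abstr I t iht =>
      intro hp p Y c hsub
      refine Deriv.abstrCongr I (iht hp p Y (c ++ [0]) ?_)
      intro a G h
      have := hsub (0 :: a) G (by simpa [reccAt] using h)
      simpa [List.append_assoc] using this
  | timeout t iht =>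
      intro hp p Y c hsub
      refine Deriv.timeoutCongr (iht hp p Y (c ++ [0]) ?_)
      intro a G h
      have := hsub (0 :: a) G (by simpa [reccAt] using h)
      simpa [List.append_assoc] using this
  | var W =>
      intro _ p Y c _
      show Deriv γ NoAx true (.recc (specAt E p) W) (θ (e2 (p, W)))
      rw [hθ (p, W)]
      exact Deriv.refl _
  | recc F Z ih =>
      intro hp p Y c hsub
      have hF : Tm.GuardedSpec F := fun W => (hp W).1
      have hspec : specAt E (p ++ [(Y, c)]) = F := by
        have h0 : reccAt ((specAt E p) Y) (c ++ []) = some F :=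
          hsub [] F (by simp [reccAt])
        rw [specAt_append]
        simp only [List.append_nil] at h0
        simp [h0]
      have step1 : Deriv γ NoAx true (Tm.sub (specAt E p) (.recc F Z))
          (Tm.sub F (F Z)) := by
        show Deriv γ NoAx true (.recc F Z) (Tm.sub F (F Z))
        exact Deriv.RDP F Z rfl hF
      refine Deriv.trans step1 ?_
      have ih' := ih Z (hp Z).2 (p ++ [(Y, c)]) Z [] ?_
      · rw [hspec] at ih'
        exact ih'
      · intro a G h
        rw [hspec]
        simpa using h
  | shift t iht => intro hp p Y c hsub; exact absurd hp (by simp [Tm.PT])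
  | tfp t iht => intro hp p Y c hsub; exact absurd hp (by simp [Tm.PT])

end NestedRec

/-- Elimination of nested recursion: for each recursion constant ⟨X|E⟩ of
ACP_drt^τ+REC there exists a guarded recursive specification E' in which no
recursion constant occurs such that ⟨X|E⟩ = ⟨X|E'⟩ is derivable from the
axioms of ACP_drt^τ+REC. -/
theorem nested_recursion_elimination {A : Type} [Fintype A]
    (γ : ATD A → ATD A → ATD A)
    (hγcomm : ∀ a b, γ a b = γ b a)
    (hγassoc : ∀ a b c, γ (γ a b) c = γ a (γ b c))
    (hγtau : ∀ a, γ ATD.tau a = ATD.delta)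
    (hγdelta : ∀ a, γ ATD.delta a = ATD.delta)
    (E : ℕ → Tm A) (X : ℕ) (hg : Tm.GuardedSpec E) (hE : ∀ Y, Tm.PT (E Y)) :
    ∃ E' : ℕ → Tm A, Tm.GuardedSpec E' ∧ (∀ Y, Tm.RecFree (E' Y)) ∧
      Deriv γ NoAx true (.recc E X) (.recc E' X) := by
    classical
  let e0 : (List (ℕ × List ℕ) × ℕ) ≃ ℕ := Denumerable.eqv _
  let e2 : (List (ℕ × List ℕ) × ℕ) ≃ ℕ := e0.trans (Equiv.swap (e0 ([], X)) X)
  let θ : ℕ → Tm A := fun n => .recc (NestedRec.specAt E (e2.symm n).1) (e2.symm n).2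
  let E' : ℕ → Tm A := fun n =>
    NestedRec.flat (⇑e2) (e2.symm n).1 (e2.symm n).2 []
      ((NestedRec.specAt E (e2.symm n).1) (e2.symm n).2)
  have hEok : NestedRec.SpecOK E := fun Y => ⟨hg Y, hE Y⟩
  have hok : ∀ n, NestedRec.SpecOK (NestedRec.specAt E (e2.symm n).1) :=
    fun n => NestedRec.specAt_ok _ E hEok
  have hg' : Tm.GuardedSpec E' := fun n =>
    NestedRec.flat_guarded _ _ ((hok n _).1) ((hok n _).2) _ _ _
  have hrf : ∀ Y, Tm.RecFree (E' Y) := fun n => NestedRec.flat_recFree _ _ _ _ _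
  have hθ : ∀ q, θ (e2 q) = .recc (NestedRec.specAt E q.1) q.2 := by
    intro q; simp [θ, Equiv.symm_apply_apply]
  have heq : ∀ n, Deriv γ NoAx true (θ n) (Tm.asg θ (E' n)) := by
    intro n
    have h1 : Deriv γ NoAx true (θ n)
        (Tm.sub (NestedRec.specAt E (e2.symm n).1)
          ((NestedRec.specAt E (e2.symm n).1) (e2.symm n).2)) :=
      Deriv.RDP _ _ rfl (fun Y => (hok n Y).1)
    refine Deriv.trans h1 ?_
    exact NestedRec.flat_deriv γ E e2 θ hθ _ ((hok n _).2) _ _ []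
      (by intro a G h; simpa using h)
  have hRSP := Deriv.RSP E' θ X rfl hg' heq
  have hX : θ X = .recc E X := by
    have h2 : e2.symm X = ([], X) := by
      rw [Equiv.symm_apply_eq]
      simp [e2, e0, Equiv.trans_apply, Equiv.swap_apply_left]
    simp [θ, h2, NestedRec.specAt]
  exact ⟨E', hg', hrf, hX ▸ hRSP⟩
end
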